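/- arXiv:1310.2581 — 13 statements merged into one kernel-verified Lean document; each statement's English description precedes it below -/
import Mathlib

section
/- The Demazure–Lusztig operator is well defined and gives the polynomial representation of the type A₁ double affine Hecke algebra: for every f ∈ 𝒳 the element s(f) − f is divisible by X² − 1 with a unique quotient g_f, and the operators satisfy the identities (T − t^{1/2})∘(T + t^{−1/2}) = 0, T∘X∘T = (multiplication by X⁻¹), π∘π = id, and π∘X∘π = q^{1/2}·(multiplication by X⁻¹); consequently T is invertible and Y = π∘T satisfies T⁻¹∘Y∘T⁻¹ = Y⁻¹ and q^{1/2}·(Y⁻¹∘X⁻¹∘Y∘X∘T∘T) = id as operators on 𝒳. -/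
/-!
Since `X² - 1` is monic, it stays a non-zero-divisor in the localization `R[X,X⁻¹]` of `R[X]`,
so the defining identity of `TT` forces `TT = t^{1/2} s + (t^{1/2} - t^{-1/2}) ∂`, where `∂` is
the divided difference `f ↦ (s f - f)/(X² - 1)`. Cancelling `X² - 1` gives
`s ∂ = X² ∂`, `∂ s = -∂`, `∂² = ∂` and `∂ (X f) = X⁻¹ (∂ f - f)`, from which the quadratic
relation and `T X T = X⁻¹` follow by direct computation; the quadratic relation exhibits
`TT - (t^{1/2} - t^{-1/2})` as the inverse of `TT`. The relations for `π` are checked on monomials.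
-/

open LaurentPolynomial

namespace LaurentPolynomial

variable {R : Type*} [CommRing R]

theorem linearMap_ext {M : Type*} [AddCommMonoid M] [Module R M] {φ ψ : R[T;T⁻¹] →ₗ[R] M}
    (h : ∀ n : ℤ, φ (T n) = ψ (T n)) : φ = ψ :=
  AddMonoidAlgebra.lhom_ext' fun n => LinearMap.ext_ring (h n)

theorem T_two_sub_one_mem_nonZeroDivisors : (T 2 - 1 : R[T;T⁻¹]) ∈ nonZeroDivisors R[T;T⁻¹] :=
  IsLocalization.map_nonZeroDivisors_le (Submonoid.powers (Polynomial.X : Polynomial R)) R[T;T⁻¹]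
    ⟨_, (Polynomial.monic_X_pow_sub_C 1 two_ne_zero).mem_nonZeroDivisors,
      by simp [algebraMap_eq_toLaurent]⟩

theorem T_two_sub_one_mul_cancel {f g : R[T;T⁻¹]} (h : (T 2 - 1) * f = (T 2 - 1) * g) : f = g :=
  (mul_cancel_left_mem_nonZeroDivisors T_two_sub_one_mem_nonZeroDivisors).mp h

theorem T_two_sub_one_dvd_T_neg_sub_T (n : ℤ) : (T 2 - 1 : R[T;T⁻¹]) ∣ T (-n) - T n := by
  have key (k : ℕ) : (T 2 - 1 : R[T;T⁻¹]) ∣ T k - T (-k) := by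
    have : (T k - T (-k) : R[T;T⁻¹]) = T (-k) * (T 2 ^ k - 1) := by
      rw [T_pow, mul_sub, ← T_add, mul_one]; congr 2; ring
    exact this ▸ dvd_mul_of_dvd_right (sub_one_dvd_pow_sub_one _ k) _
  obtain ⟨k, rfl | rfl⟩ := n.eq_nat_or_neg
  · exact (dvd_neg.mpr (key k)).trans (by rw [neg_sub])
  · simpa using key k

theorem T_two_sub_one_dvd_invert_sub (f : R[T;T⁻¹]) : (T 2 - 1 : R[T;T⁻¹]) ∣ invert f - f := by
  induction f using LaurentPolynomial.induction_on' with
  | add f g hf hg => simpa [add_sub_add_comm] using dvd_add hf hg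
  | C_mul_T n a =>
    simpa [← mul_sub] using dvd_mul_of_dvd_right (T_two_sub_one_dvd_T_neg_sub_T n) (C a)

/-- The quotient `g_f` of the paper. -/
noncomputable def divDiff : Module.End R R[T;T⁻¹] where
  toFun f := (T_two_sub_one_dvd_invert_sub f).choose
  map_add' f g := T_two_sub_one_mul_cancel <| by
    rw [mul_add, ← (T_two_sub_one_dvd_invert_sub (f + g)).choose_spec,
      ← (T_two_sub_one_dvd_invert_sub f).choose_spec,
      ← (T_two_sub_one_dvd_invert_sub g).choose_spec, map_add]
    ring
  map_smul' r f := T_two_sub_one_mul_cancel <| by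
    rw [RingHom.id_apply, mul_smul_comm, ← (T_two_sub_one_dvd_invert_sub (r • f)).choose_spec,
      ← (T_two_sub_one_dvd_invert_sub f).choose_spec, map_smul, smul_sub]

theorem T_two_sub_one_mul_divDiff (f : R[T;T⁻¹]) : (T 2 - 1) * divDiff f = invert f - f :=
  (T_two_sub_one_dvd_invert_sub f).choose_spec.symm

theorem eq_divDiff_of_mul_eq {f g : R[T;T⁻¹]} (h : (T 2 - 1) * g = invert f - f) :
    g = divDiff f :=
  T_two_sub_one_mul_cancel (h.trans (T_two_sub_one_mul_divDiff f).symm)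

theorem divDiff_invert (f : R[T;T⁻¹]) : divDiff (invert f) = -divDiff f :=
  (eq_divDiff_of_mul_eq <| by
    rw [mul_neg, T_two_sub_one_mul_divDiff, involutive_invert, neg_sub]).symm

theorem invert_divDiff (f : R[T;T⁻¹]) : invert (divDiff f) = T 2 * divDiff f := by
  have h := congrArg invert (T_two_sub_one_mul_divDiff f)
  simp only [map_mul, map_sub, map_one, invert_T, involutive_invert f] at h
  have hT : (T 2 * T (-2) : R[T;T⁻¹]) = 1 := by rw [← T_add]; simp
  apply T_two_sub_one_mul_cancel
  linear_combination (-T 2) * h + invert (divDiff f) * hT - T 2 * T_two_sub_one_mul_divDiff f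

theorem divDiff_divDiff (f : R[T;T⁻¹]) : divDiff (divDiff f) = divDiff f :=
  (eq_divDiff_of_mul_eq (by rw [invert_divDiff]; ring)).symm

theorem divDiff_T_one_mul (f : R[T;T⁻¹]) : divDiff (T 1 * f) = T (-1) * (divDiff f - f) := by
  refine (eq_divDiff_of_mul_eq ?_).symm
  have hT : (T (-1) * T 2 : R[T;T⁻¹]) = T 1 := by rw [← T_add]; simp
  rw [map_mul, invert_T]
  linear_combination T (-1) * T_two_sub_one_mul_divDiff f - f * hT

/-- `t` plays the role of `t^{1/2}`. -/
noncomputable def demazureLusztig (t : Rˣ) : Module.End R R[T;T⁻¹] :=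
  (t : R) • invert.toLinearMap + ((t : R) - ↑t⁻¹) • divDiff

theorem demazureLusztig_apply (t : Rˣ) (f : R[T;T⁻¹]) :
    demazureLusztig t f = (t : R) • invert f + ((t : R) - ↑t⁻¹) • divDiff f :=
  rfl

theorem eq_demazureLusztig {t : Rˣ} {D : Module.End R R[T;T⁻¹]}
    (h : ∀ f, (T 2 - 1) * (D f - (t : R) • invert f) = ((t : R) - ↑t⁻¹) • (invert f - f)) :
    D = demazureLusztig t := by
  refine LinearMap.ext fun f => ?_
  have : D f - (t : R) • invert f = ((t : R) - ↑t⁻¹) • divDiff f := by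
    apply T_two_sub_one_mul_cancel
    rw [h, mul_smul_comm, T_two_sub_one_mul_divDiff]
  rw [demazureLusztig_apply, ← this, add_sub_cancel]

theorem demazureLusztig_mul_self (t : Rˣ) :
    demazureLusztig t * demazureLusztig t =
      ((t : R) - ↑t⁻¹) • demazureLusztig t + 1 := by
  refine LinearMap.ext fun f => ?_
  have ht : C (t : R) * C ((t⁻¹ : Rˣ) : R) = 1 := by simp [← map_mul]
  have hf : invert (invert f) = f := involutive_invert f
  simp only [Module.End.mul_apply, LinearMap.add_apply, LinearMap.smul_apply,
    Module.End.one_apply, demazureLusztig_apply, map_add, map_smul, hf, invert_divDiff,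
    divDiff_invert, divDiff_divDiff]
  simp only [smul_eq_C_mul, map_sub]
  linear_combination
    C (t : R) * (C (t : R) - C ((t⁻¹ : Rˣ) : R)) * T_two_sub_one_mul_divDiff f + f * ht

theorem demazureLusztig_sub_mul_add (t : Rˣ) :
    (demazureLusztig t - (t : R) • 1) * (demazureLusztig t + ((t⁻¹ : Rˣ) : R) • 1) = 0 := by
  have ht : (t : R) * ((t⁻¹ : Rˣ) : R) = 1 := t.mul_inv
  rw [sub_mul, mul_add, mul_add, demazureLusztig_mul_self, mul_smul_one, smul_mul_assoc,
    smul_mul_assoc, one_mul, one_mul, smul_smul, ht]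
  module

theorem sub_smul_one_mul_demazureLusztig (t : Rˣ) :
    (demazureLusztig t - ((t : R) - ↑t⁻¹) • 1) * demazureLusztig t = 1 := by
  rw [sub_mul, demazureLusztig_mul_self, smul_mul_assoc, one_mul, add_sub_cancel_left]

theorem demazureLusztig_mul_sub_smul_one (t : Rˣ) :
    demazureLusztig t * (demazureLusztig t - ((t : R) - ↑t⁻¹) • 1) = 1 := by
  rw [mul_sub, demazureLusztig_mul_self, mul_smul_one, add_sub_cancel_left]

theorem demazureLusztig_T_one_mul (t : Rˣ) (f : R[T;T⁻¹]) :
    demazureLusztig t (T 1 * f) = T (-1) * (demazureLusztig t f - ((t : R) - ↑t⁻¹) • f) := by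
  simp only [demazureLusztig_apply, map_mul, invert_T, divDiff_T_one_mul, mul_sub, mul_add,
    mul_smul_comm]
  module

theorem demazureLusztig_mul_mulLeft_T_one_mul (t : Rˣ) :
    demazureLusztig t * LinearMap.mulLeft R (T 1) * demazureLusztig t =
      LinearMap.mulLeft R (T (-1)) := by
  refine LinearMap.ext fun f => ?_
  have hsq := LinearMap.congr_fun (demazureLusztig_mul_self t) f
  simp only [Module.End.mul_apply, LinearMap.add_apply, LinearMap.smul_apply,
    Module.End.one_apply] at hsq
  rw [Module.End.mul_apply, Module.End.mul_apply, LinearMap.mulLeft_apply,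
    demazureLusztig_T_one_mul, hsq, add_sub_cancel_left, LinearMap.mulLeft_apply]

theorem mul_mulLeft_T_mul_of_apply_T {q : Rˣ} {π : Module.End R R[T;T⁻¹]}
    (hπ : ∀ n : ℤ, π (T n) = ((q ^ n : Rˣ) : R) • T (-n)) (n : ℤ) :
    π * LinearMap.mulLeft R (T n) * π = ((q ^ n : Rˣ) : R) • LinearMap.mulLeft R (T (-n)) := by
  refine linearMap_ext fun m => ?_
  simp only [Module.End.mul_apply, LinearMap.smul_apply, LinearMap.mulLeft_apply, hπ,
    map_smul, ← T_add, smul_smul, ← Units.val_mul, ← zpow_add]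
  congr 3 <;> ring

theorem mul_self_eq_one_of_apply_T {q : Rˣ} {π : Module.End R R[T;T⁻¹]}
    (hπ : ∀ n : ℤ, π (T n) = ((q ^ n : Rˣ) : R) • T (-n)) : π * π = 1 := by
  simpa [T_zero, LinearMap.mulLeft_one, ← Module.End.one_eq_id] using
    mul_mulLeft_T_mul_of_apply_T hπ 0

end LaurentPolynomial

/-- The Demazure–Lusztig operator is well defined and gives the polynomial
representation of the type `A₁` double affine Hecke algebra. Here `s`, `π` are the
`R`-linear operators on `𝒳 = R[X,X⁻¹]` with `s(Xⁿ) = X⁻ⁿ`, `π(Xⁿ) = q^{n/2}X⁻ⁿ`,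
and `TT` is the Demazure–Lusztig operator, encoded by the hypothesis `hT` which says
`(X² − 1)·(TT f − t^{1/2}·s f) = (t^{1/2} − t^{−1/2})·(s f − f)` (equivalently
`TT f = t^{1/2} s f + (t^{1/2} − t^{−1/2}) g_f` with `(X²−1) g_f = s f − f`). -/
theorem stmt0 (R : Type*) [CommRing R] (q2 t2 : Rˣ)
    (s π TT : Module.End R (LaurentPolynomial R))
    (hs : ∀ n : ℤ, s (T n) = T (-n))
    (hπ : ∀ n : ℤ, π (T n) = ((q2 ^ n : Rˣ) : R) • T (-n))
    (hT : ∀ f : LaurentPolynomial R,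
      (T 2 - 1) * (TT f - (t2 : R) • s f) =
        ((t2 : R) - ((t2⁻¹ : Rˣ) : R)) • (s f - f)) :
    -- for every f, s f − f is divisible by X² − 1 with a unique quotient
    (∀ f : LaurentPolynomial R, ∃! g : LaurentPolynomial R, (T 2 - 1) * g = s f - f) ∧
    -- (T − t^{1/2}) ∘ (T + t^{−1/2}) = 0
    (TT - (t2 : R) • (1 : Module.End R (LaurentPolynomial R))) *
        (TT + ((t2⁻¹ : Rˣ) : R) • (1 : Module.End R (LaurentPolynomial R))) = 0 ∧
    -- T ∘ X ∘ T = multiplication by X⁻¹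
    TT * (LinearMap.mulLeft R (T 1) : Module.End R (LaurentPolynomial R)) * TT =
      (LinearMap.mulLeft R (T (-1)) : Module.End R (LaurentPolynomial R)) ∧
    -- π ∘ π = id
    π * π = 1 ∧
    -- π ∘ X ∘ π = q^{1/2} · multiplication by X⁻¹
    π * (LinearMap.mulLeft R (T 1) : Module.End R (LaurentPolynomial R)) * π =
      (q2 : R) • (LinearMap.mulLeft R (T (-1)) : Module.End R (LaurentPolynomial R)) ∧
    -- T is invertible, and Y = π ∘ T satisfies the remaining relations
    (∃ Ti : Module.End R (LaurentPolynomial R), Ti * TT = 1 ∧ TT * Ti = 1 ∧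
      ∃ Yi : Module.End R (LaurentPolynomial R),
        Yi * (π * TT) = 1 ∧ (π * TT) * Yi = 1 ∧
        Ti * (π * TT) * Ti = Yi ∧
        (q2 : R) • (Yi * (LinearMap.mulLeft R (T (-1)) : Module.End R (LaurentPolynomial R)) *
          (π * TT) * (LinearMap.mulLeft R (T 1) : Module.End R (LaurentPolynomial R)) *
          TT * TT) = 1) := by
  obtain rfl : s = invert.toLinearMap := linearMap_ext fun n => by simp [hs]
  obtain rfl : TT = demazureLusztig t2 := eq_demazureLusztig hT
  set Ti := demazureLusztig t2 - ((t2 : R) - ↑t2⁻¹) • 1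
  have hTiT : Ti * demazureLusztig t2 = 1 := sub_smul_one_mul_demazureLusztig t2
  have hTTi : demazureLusztig t2 * Ti = 1 := demazureLusztig_mul_sub_smul_one t2
  have hππ : π * π = 1 := mul_self_eq_one_of_apply_T hπ
  have hX : LinearMap.mulLeft R (T 1) * LinearMap.mulLeft R (T (-1)) =
      (1 : Module.End R R[T;T⁻¹]) := by
    rw [Module.End.mul_eq_comp, ← LinearMap.mulLeft_mul, ← T_add, add_neg_cancel, T_zero,
      LinearMap.mulLeft_one, Module.End.one_eq_id]
  refine ⟨fun f => ⟨divDiff f, T_two_sub_one_mul_divDiff f, fun g hg => eq_divDiff_of_mul_eq hg⟩,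
    demazureLusztig_sub_mul_add t2, demazureLusztig_mul_mulLeft_T_one_mul t2, hππ,
    by simpa using mul_mulLeft_T_mul_of_apply_T hπ 1, Ti, hTiT, hTTi, Ti * π, ?_, ?_, ?_, ?_⟩
  · rw [mul_assoc, ← mul_assoc π, hππ, one_mul, hTiT]
  · rw [mul_assoc, ← mul_assoc _ Ti, hTTi, one_mul, hππ]
  · rw [mul_assoc, mul_assoc, hTTi, mul_one]
  · calc (q2 : R) • (Ti * π * LinearMap.mulLeft R (T (-1)) * (π * demazureLusztig t2) *
          LinearMap.mulLeft R (T 1) * demazureLusztig t2 * demazureLusztig t2)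
        = (q2 : R) • (Ti * (π * LinearMap.mulLeft R (T (-1)) * π) *
          (demazureLusztig t2 * LinearMap.mulLeft R (T 1) * demazureLusztig t2) *
            demazureLusztig t2) := by simp only [mul_assoc]
      _ = 1 := by
        rw [mul_mulLeft_T_mul_of_apply_T hπ, demazureLusztig_mul_mulLeft_T_one_mul]
        simp [smul_smul, mul_assoc, hX, hTiT]
end

section
/- Ideals generated by symmetric π-eigenvectors are stable under the polynomial representation: π is a ring homomorphism of 𝒳; if f ∈ 𝒳 satisfies s(f) = f, then T(f·g) = f·T(g) for all g ∈ 𝒳; consequently, if in addition π(f) = c·f for some c ∈ R, then the principal ideal f·𝒳 is stable under T, π, Y = π∘T, and multiplication by X. In particular, if q^N = 1 in R for some N ∈ ℕ, then π(X^N + X^{−N}) = q^{N/2}(X^N + X^{−N}), so the ideal generated by X^N + X^{−N} is stable under all of these operators. -/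
/-!
`s` and `π` send `Xⁿ` to `qⁿ X⁻ⁿ` for a unit `q`, so they are ring endomorphisms of `𝒳`.
As `X² − 1` is monic in `R[X]` and `𝒳` is a localization of `R[X]`, it is a non-zero-divisor
of `𝒳`, so the relation `(X² − 1)(T f − a s f) = b (s f − f)` determines `T`. For symmetric `f`
both sides become `f`-linear because `s` is multiplicative, whence `T (f g) = f T(g)`. So `(f)`
is stable under `T`, under `π` when `f` is a `π`-eigenvector, and hence under `Y = π ∘ T`.
-/

open LaurentPolynomial Polynomial
open scoped nonZeroDivisors

namespace LaurentPolynomial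

variable {R : Type*} [CommRing R]

theorem T_sub_one_mem_nonZeroDivisors {n : ℕ} (hn : n ≠ 0) :
    (T n - 1 : R[T;T⁻¹]) ∈ R[T;T⁻¹]⁰ := by
  have hmonic : (X ^ n - 1 : R[X]).Monic := by simpa using monic_X_pow_sub_C (1 : R) hn
  simpa [algebraMap_eq_toLaurent] using
    IsLocalization.nonZeroDivisors_le_comap (Submonoid.powers X) R[T;T⁻¹]
      hmonic.mem_nonZeroDivisors

section TwistedInversion

variable {L : Module.End R R[T;T⁻¹]} {q : Rˣ}

theorem map_one_of_apply_T (hL : ∀ n : ℤ, L (T n) = ((q ^ n : Rˣ) : R) • T (-n)) : L 1 = 1 := by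
  simpa using hL 0

theorem map_mul_of_apply_T (hL : ∀ n : ℤ, L (T n) = ((q ^ n : Rˣ) : R) • T (-n))
    (f g : R[T;T⁻¹]) : L (f * g) = L f * L g := by
  induction f using LaurentPolynomial.induction_on' with
  | add f₁ f₂ h₁ h₂ => rw [add_mul, map_add, map_add, h₁, h₂, add_mul]
  | C_mul_T m a =>
    induction g using LaurentPolynomial.induction_on' with
    | add g₁ g₂ h₁ h₂ => rw [mul_add, map_add, map_add, h₁, h₂, mul_add]
    | C_mul_T n b =>
      simp only [← smul_eq_C_mul, smul_mul_smul_comm, ← T_add, map_smul, hL, neg_add, zpow_add,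
        Units.val_mul, smul_smul]
      ring_nf

theorem apply_T_add_T_neg (hL : ∀ n : ℤ, L (T n) = ((q ^ n : Rˣ) : R) • T (-n)) {N : ℕ}
    (hq : (q : R) ^ (2 * N) = 1) :
    L (T N + T (-N)) = ((q ^ (N : ℤ) : Rˣ) : R) • (T N + T (-N)) := by
  have hinv : q ^ (-(N : ℤ)) = q ^ (N : ℤ) := by
    rw [zpow_neg, zpow_natCast, inv_eq_iff_eq_inv, eq_comm, inv_eq_of_mul_eq_one_right]
    ext
    simpa [← pow_add, ← two_mul] using hq
  rw [map_add, hL, hL, neg_neg, hinv, ← smul_add, add_comm (T (-(N : ℤ)))]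

end TwistedInversion

theorem apply_mul_of_symmetric {s TT : Module.End R R[T;T⁻¹]} {a b : R}
    (hs : ∀ f g, s (f * g) = s f * s g)
    (hT : ∀ f, (T 2 - 1) * (TT f - a • s f) = b • (s f - f))
    {f : R[T;T⁻¹]} (hf : s f = f) (g : R[T;T⁻¹]) : TT (f * g) = f * TT g := by
  have hsfg : s (f * g) = f * s g := by rw [hs, hf]
  have key : TT (f * g) - a • s (f * g) = f * (TT g - a • s g) := by
    refine (mul_cancel_left_mem_nonZeroDivisors
      (T_sub_one_mem_nonZeroDivisors (R := R) two_ne_zero)).1 ?_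
    rw [Nat.cast_ofNat, hT, mul_left_comm, hT, hsfg, mul_smul_comm, mul_sub]
  rwa [hsfg, mul_sub, mul_smul_comm, sub_left_inj] at key

end LaurentPolynomial

theorem dvd_apply_of_map_mul_of_apply_eq_smul {R A : Type*} [CommSemiring R] [CommSemiring A]
    [Algebra R A] {L : A → A} (hL : ∀ x y, L (x * y) = L x * L y) {f : A} {c : R}
    (hf : L f = c • f) {x : A} (hx : f ∣ x) : f ∣ L x := by
  obtain ⟨g, rfl⟩ := hx
  exact ⟨c • L g, by rw [hL, hf, smul_mul_assoc, mul_smul_comm]⟩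

/-- Ideals generated by symmetric `π`-eigenvectors are stable under the polynomial
representation of the type `A₁` DAHA. Here `s`, `π` are the `R`-linear operators on
`𝒳 = R[X,X⁻¹]` with `s(Xⁿ) = X⁻ⁿ`, `π(Xⁿ) = q^{n/2}X⁻ⁿ`, and `TT` is the
Demazure–Lusztig operator (encoded by `hT` as in the definition
`TT f = t^{1/2} s f + (t^{1/2} − t^{−1/2}) g_f`, `(X²−1) g_f = s f − f`). -/
theorem stmt1 (R : Type*) [CommRing R] (q2 t2 : Rˣ)
    (s π TT : Module.End R (LaurentPolynomial R))
    (hs : ∀ n : ℤ, s (T n) = T (-n))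
    (hπ : ∀ n : ℤ, π (T n) = ((q2 ^ n : Rˣ) : R) • T (-n))
    (hT : ∀ f : LaurentPolynomial R,
      (T 2 - 1) * (TT f - (t2 : R) • s f) =
        ((t2 : R) - ((t2⁻¹ : Rˣ) : R)) • (s f - f)) :
    -- π is a ring homomorphism of 𝒳
    (π (1 : LaurentPolynomial R) = 1 ∧
      ∀ f g : LaurentPolynomial R, π (f * g) = π f * π g) ∧
    -- if s(f) = f then T(f·g) = f·T(g)
    (∀ f : LaurentPolynomial R, s f = f →
      ∀ g : LaurentPolynomial R, TT (f * g) = f * TT g) ∧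
    -- if moreover π(f) = c·f then the principal ideal (f) is stable under T, π, Y, X
    (∀ f : LaurentPolynomial R, s f = f → ∀ c : R, π f = c • f →
      ∀ x ∈ Ideal.span ({f} : Set (LaurentPolynomial R)),
        TT x ∈ Ideal.span ({f} : Set (LaurentPolynomial R)) ∧
        π x ∈ Ideal.span ({f} : Set (LaurentPolynomial R)) ∧
        π (TT x) ∈ Ideal.span ({f} : Set (LaurentPolynomial R)) ∧
        T 1 * x ∈ Ideal.span ({f} : Set (LaurentPolynomial R))) ∧
    -- the particular case f = X^N + X^{−N} when q^N = 1
    (∀ N : ℕ, (q2 : R) ^ (2 * N) = 1 →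
      π (T (N : ℤ) + T (-(N : ℤ))) =
        ((q2 ^ (N : ℤ) : Rˣ) : R) • (T (N : ℤ) + T (-(N : ℤ))) ∧
      ∀ x ∈ Ideal.span ({T (N : ℤ) + T (-(N : ℤ))} : Set (LaurentPolynomial R)),
        TT x ∈ Ideal.span ({T (N : ℤ) + T (-(N : ℤ))} : Set (LaurentPolynomial R)) ∧
        π x ∈ Ideal.span ({T (N : ℤ) + T (-(N : ℤ))} : Set (LaurentPolynomial R)) ∧
        π (TT x) ∈ Ideal.span ({T (N : ℤ) + T (-(N : ℤ))} : Set (LaurentPolynomial R)) ∧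
        T 1 * x ∈ Ideal.span ({T (N : ℤ) + T (-(N : ℤ))} : Set (LaurentPolynomial R))) := by
  have hs₁ : ∀ n : ℤ, s (T n) = ((1 ^ n : Rˣ) : R) • T (-n) := by simpa using hs
  have hTT : ∀ f, s f = f → ∀ g, TT (f * g) = f * TT g := fun f hf =>
    apply_mul_of_symmetric (map_mul_of_apply_T hs₁) hT hf
  have hstable : ∀ f, s f = f → ∀ c : R, π f = c • f → ∀ x ∈ Ideal.span {f},
      TT x ∈ Ideal.span {f} ∧ π x ∈ Ideal.span {f} ∧ π (TT x) ∈ Ideal.span {f} ∧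
        T 1 * x ∈ Ideal.span {f} := by
    intro f hsf c hπf x hx
    simp only [Ideal.mem_span_singleton] at hx ⊢
    have hdvdT : ∀ y, f ∣ y → f ∣ TT y := fun _ ⟨g, hg⟩ => ⟨TT g, hg ▸ hTT f hsf g⟩
    have hdvdπ : ∀ y, f ∣ y → f ∣ π y := fun _ =>
      dvd_apply_of_map_mul_of_apply_eq_smul (map_mul_of_apply_T hπ) hπf
    exact ⟨hdvdT x hx, hdvdπ x hx, hdvdπ _ (hdvdT x hx), dvd_mul_of_dvd_right hx _⟩
  refine ⟨⟨map_one_of_apply_T hπ, map_mul_of_apply_T hπ⟩, hTT, hstable, fun N hN => ?_⟩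
  have hπN := apply_T_add_T_neg hπ hN
  have hsN : s (T N + T (-N)) = T N + T (-N) := by
    simpa using apply_T_add_T_neg hs₁ (N := N) (by simp)
  exact ⟨hπN, hstable _ hsN _ hπN⟩
end

section
/- Jordan-block formula at t = −1: suppose R contains an element i with i² = −1 and set t^{1/2} = i (so t = −1). Then for every symmetric Laurent polynomial P ∈ 𝒳 (i.e., s(P) = P), the Demazure–Lusztig operator satisfies T(P·(X − X⁻¹)) = i·P·(X − X⁻¹) − 2i·P·(X + X⁻¹). -/
/-!
Write `f = P·(X − X⁻¹)`. Since `s` is the substitution `X ↦ X⁻¹`, it is multiplicative,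
so `s f = −f` when `P` is symmetric; the defining relation of `T` then reads
`(X² − 1)·(T f + i·f) = −4i·f`. As `X² − 1` is a non-zero-divisor among Laurent
polynomials (it is monic in `R[X]`, and `R[X] → R[X, X⁻¹]` is a localization at the
non-zero-divisor `X`), it suffices to check the claimed formula after multiplying by
`X² − 1`, which is a ring identity once `X²·X⁻¹ = X` is used.
-/

open LaurentPolynomial

namespace LaurentPolynomial

variable {R : Type*}

theorem isRegular_T_sub_one [CommRing R] {n : ℤ} (hn : 0 < n) :
    IsRegular (T n - 1 : R[T;T⁻¹]) := by
  lift n to ℕ using hn.le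
  have hpoly : (Polynomial.X ^ n - Polynomial.C 1 : Polynomial R) ∈ nonZeroDivisors _ :=
    isRegular_iff_mem_nonZeroDivisors.mp (Polynomial.monic_X_pow_sub_C 1 (by omega)).isRegular
  have hmem := IsLocalization.map_nonZeroDivisors_le
    (Submonoid.powers (Polynomial.X : Polynomial R)) R[T;T⁻¹] (Submonoid.mem_map_of_mem _ hpoly)
  simpa using isRegular_iff_mem_nonZeroDivisors.mpr hmem

theorem eq_invert_of_map_T [CommSemiring R] (s : Module.End R R[T;T⁻¹])
    (hs : ∀ n : ℤ, s (T n) = T (-n)) (f : R[T;T⁻¹]) : s f = invert f := by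
  induction f using LaurentPolynomial.induction_on' with
  | add p q hp hq => rw [map_add, map_add, hp, hq]
  | C_mul_T n a => rw [← smul_eq_C_mul, map_smul, map_smul, hs, invert_T]

end LaurentPolynomial

theorem stmt2_general (R : Type*) [CommRing R] (i : R)
    (s TT : Module.End R (LaurentPolynomial R))
    (hs : ∀ n : ℤ, s (T n) = T (-n))
    (hT : ∀ f : LaurentPolynomial R,
      (T 2 - 1) * (TT f - i • s f) = (2 * i) • (s f - f)) :
    ∀ P : LaurentPolynomial R, s P = P →
      TT (P * (T 1 - T (-1))) =
        i • (P * (T 1 - T (-1))) - (2 * i) • (P * (T 1 + T (-1))) := by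
  intro P hP
  have hs_anti : s (P * (T 1 - T (-1))) = -(P * (T 1 - T (-1))) := by
    rw [eq_invert_of_map_T s hs, map_mul, ← eq_invert_of_map_T s hs P, hP]
    simp only [map_sub, invert_T, neg_neg]
    ring
  have hrel := hT (P * (T 1 - T (-1)))
  rw [hs_anti] at hrel
  have hT_mul : (T 2 : R[T;T⁻¹]) * T (-1) = T 1 := by rw [← T_add]; norm_num
  refine (isRegular_T_sub_one (R := R) two_pos).left ?_
  simp only [Algebra.smul_def, map_mul, map_ofNat] at hrel ⊢
  linear_combination hrel + (4 * algebraMap R R[T;T⁻¹] i * P) * hT_mul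

/-- Jordan-block formula at `t = −1`: with `t^{1/2} = i`, `i² = −1` (so
`t^{1/2} − t^{−1/2} = 2i`), for every symmetric Laurent polynomial `P` the
Demazure–Lusztig operator satisfies
`T(P·(X − X⁻¹)) = i·P·(X − X⁻¹) − 2i·P·(X + X⁻¹)`.
Here `s` is the `R`-linear operator with `s(Xⁿ) = X⁻ⁿ` and `TT` is the
Demazure–Lusztig operator, encoded by `hT` (which says
`(X²−1)·(TT f − i·s f) = 2i·(s f − f)`, i.e. `TT f = i·s f + 2i·g_f` with
`(X²−1)·g_f = s f − f`). -/
theorem stmt2 (R : Type*) [CommRing R] (i : R) (hi : i ^ 2 = -1)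
    (s TT : Module.End R (LaurentPolynomial R))
    (hs : ∀ n : ℤ, s (T n) = T (-n))
    (hT : ∀ f : LaurentPolynomial R,
      (T 2 - 1) * (TT f - i • s f) = (2 * i) • (s f - f)) :
    ∀ P : LaurentPolynomial R, s P = P →
      TT (P * (T 1 - T (-1))) =
        i • (P * (T 1 - T (-1))) - (2 * i) • (P * (T 1 + T (-1))) :=
  stmt2_general R i s TT hs hT
end

section
/- Reflection generators of the elliptic braid group: let G be a group with elements X, Y, T and a central element c satisfying the elliptic q-braid relations of type A₁. Then the elements A = XT, B = XTY, and C = T⁻¹Y satisfy A² = 1, C² = 1, c·B² = 1, and A·B·C = T. -/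
/-- Reflection generators of the elliptic braid group: if `X, Y, T` and a central
element `c` of a group `G` satisfy the elliptic `q`-braid relations of type `A₁`
(`TXT = X⁻¹`, `T⁻¹YT⁻¹ = Y⁻¹`, `Y⁻¹X⁻¹YXT²c = 1`), then `A = XT`, `B = XTY`,
`C = T⁻¹Y` satisfy `A² = 1`, `C² = 1`, `c·B² = 1`, and `A·B·C = T`. -/
theorem stmt4 (G : Type*) [Group G] (X Y T c : G)
    (hc : ∀ g : G, c * g = g * c)
    (h1 : T * X * T = X⁻¹)
    (h2 : T⁻¹ * Y * T⁻¹ = Y⁻¹)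
    (h3 : Y⁻¹ * X⁻¹ * Y * X * T ^ 2 * c = 1) :
    (X * T) ^ 2 = 1 ∧
    (T⁻¹ * Y) ^ 2 = 1 ∧
    c * (X * T * Y) ^ 2 = 1 ∧
    (X * T) * (X * T * Y) * (T⁻¹ * Y) = T := by
  have h3' : Y * X * T ^ 2 * c = X * Y := by
    calc Y * X * T ^ 2 * c = X * Y * (Y⁻¹ * X⁻¹ * Y * X * T ^ 2 * c) := by group
    _ = X * Y := by rw [h3]; group
  have hXT : X * T * X = T⁻¹ := by
    calc X * T * X = X * (T * X * T) * T⁻¹ := by group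
    _ = T⁻¹ := by rw [h1]; group
  have hYTY : Y * T⁻¹ * Y = T := by
    calc Y * T⁻¹ * Y = T * (T⁻¹ * Y * T⁻¹) * Y := by group
    _ = T := by rw [h2]; group
  have g1 : (X * T) ^ 2 = 1 := by
    calc (X * T) ^ 2 = X * (T * X * T) := by rw [sq]; group
    _ = 1 := by rw [h1]; group
  have g2 : (T⁻¹ * Y) ^ 2 = 1 := by
    calc (T⁻¹ * Y) ^ 2 = (T⁻¹ * Y * T⁻¹) * Y := by rw [sq]; group
    _ = 1 := by rw [h2]; group
  have g3 : c * (X * T * Y) ^ 2 = 1 := by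
    have step : c * (X * T * Y) ^ 2 = X * T * (Y * X * T ^ 2 * c) * (T⁻¹ * Y) := by
      rw [show X * T * (Y * X * T ^ 2 * c) * (T⁻¹ * Y)
            = X * T * (Y * X * T ^ 2) * (c * (T⁻¹ * Y)) by group,
          hc (T⁻¹ * Y),
          show X * T * (Y * X * T ^ 2) * ((T⁻¹ * Y) * c)
            = (X * T * Y * X * T * Y) * c by group,
          ← hc, sq]
      group
    rw [step, h3']
    calc X * T * (X * Y) * (T⁻¹ * Y) = (X * T * X) * (Y * T⁻¹ * Y) := by group
    _ = 1 := by rw [hXT, hYTY]; group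
  refine ⟨g1, g2, g3, ?_⟩
  calc (X * T) * (X * T * Y) * (T⁻¹ * Y) = (X * (T * X * T)) * (Y * T⁻¹ * Y) := by group
  _ = T := by rw [h1, hYTY]; group
end

section
/- The projective PSL₂(ℤ) generators τ₊ and τ₋ preserve the DAHA relations: let A be an associative unital algebra with invertible elements X, Y, T and central invertible elements q^{1/4} and t^{1/2} such that X, Y, T, q^{1/2} = (q^{1/4})², t^{1/2} satisfy the type A₁ double affine Hecke algebra relations. Then both of the triples (X′, Y′, T′) = (X, (q^{1/4})⁻¹·X·Y, T) and (X′, Y′, T′) = (q^{1/4}·Y·X, Y, T) again satisfy all four type A₁ double affine Hecke algebra relations (with the same q^{1/2} and t^{1/2}). -/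
/-- The projective `PSL₂(ℤ)` generators `τ₊` and `τ₋` preserve the DAHA relations:
if invertible `X, Y, T` and central invertible `q^{1/4}`, `t^{1/2}` satisfy the type
`A₁` DAHA relations (with `q^{1/2} = (q^{1/4})²`), then so do the triples
`(X, q^{−1/4}XY, T)` and `(q^{1/4}YX, Y, T)`. -/
theorem stmt5 (A : Type*) [Ring A] (X Y T q4 t2 : Aˣ)
    (hq : ∀ a : A, (q4 : A) * a = a * (q4 : A))
    (ht : ∀ a : A, (t2 : A) * a = a * (t2 : A))
    (hquad : ((T : A) - (t2 : A)) * ((T : A) + ((t2⁻¹ : Aˣ) : A)) = 0)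
    (h1 : T * X * T = X⁻¹)
    (h2 : T⁻¹ * Y * T⁻¹ = Y⁻¹)
    (h3 : Y⁻¹ * X⁻¹ * Y * X * T ^ 2 * q4 ^ 2 = 1) :
    -- τ₊ : (X′, Y′, T′) = (X, q^{−1/4}·X·Y, T)
    (((T : A) - (t2 : A)) * ((T : A) + ((t2⁻¹ : Aˣ) : A)) = 0 ∧
      T * X * T = X⁻¹ ∧
      T⁻¹ * (q4⁻¹ * X * Y) * T⁻¹ = (q4⁻¹ * X * Y)⁻¹ ∧
      (q4⁻¹ * X * Y)⁻¹ * X⁻¹ * (q4⁻¹ * X * Y) * X * T ^ 2 * q4 ^ 2 = 1) ∧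
    -- τ₋ : (X′, Y′, T′) = (q^{1/4}·Y·X, Y, T)
    (((T : A) - (t2 : A)) * ((T : A) + ((t2⁻¹ : Aˣ) : A)) = 0 ∧
      T * (q4 * Y * X) * T = (q4 * Y * X)⁻¹ ∧
      T⁻¹ * Y * T⁻¹ = Y⁻¹ ∧
      Y⁻¹ * (q4 * Y * X)⁻¹ * Y * (q4 * Y * X) * T ^ 2 * q4 ^ 2 = 1) := by
  have hc : ∀ u : Aˣ, q4 * u = u * q4 := fun u => Units.ext (hq u)
  have hcinv : ∀ u : Aˣ, q4⁻¹ * u = u * q4⁻¹ := by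
    intro u
    calc q4⁻¹ * u = q4⁻¹ * (u * q4) * q4⁻¹ := by group
      _ = q4⁻¹ * (q4 * u) * q4⁻¹ := by rw [hc u]
      _ = u * q4⁻¹ := by group
  have hc2 : ∀ u : Aˣ, q4 ^ 2 * u = u * q4 ^ 2 := by
    intro u
    rw [sq, mul_assoc, hc u, ← mul_assoc, hc u, mul_assoc]
  have hXY : X * Y = Y * X * T ^ 2 * q4 ^ 2 := by
    calc X * Y = X * (Y * (Y⁻¹ * X⁻¹ * Y * X * T ^ 2 * q4 ^ 2)) := by rw [h3, mul_one]
      _ = Y * X * T ^ 2 * q4 ^ 2 := by group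
  have hT2 : T ^ 2 = X⁻¹ * Y⁻¹ * X * Y * (q4⁻¹ * q4⁻¹) := by
    calc T ^ 2
        = X⁻¹ * Y⁻¹ * X * Y * (Y⁻¹ * X⁻¹ * Y * X * T ^ 2 * q4 ^ 2) * (q4⁻¹ * q4⁻¹) := by
          group
      _ = X⁻¹ * Y⁻¹ * X * Y * (q4⁻¹ * q4⁻¹) := by rw [h3]; group
  have key : T⁻¹ * (X * Y) * T⁻¹ = Y⁻¹ * X⁻¹ * q4 ^ 2 := by
    calc T⁻¹ * (X * Y) * T⁻¹
        = T⁻¹ * (Y * X * T ^ 2 * q4 ^ 2) * T⁻¹ := by rw [← hXY]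
      _ = T⁻¹ * (Y * X * T ^ 2) * (q4 ^ 2 * T⁻¹) := by group
      _ = T⁻¹ * (Y * X * T ^ 2) * (T⁻¹ * q4 ^ 2) := by rw [hc2 T⁻¹]
      _ = (T⁻¹ * Y * T⁻¹) * (T * X * T) * q4 ^ 2 := by group
      _ = Y⁻¹ * X⁻¹ * q4 ^ 2 := by rw [h1, h2]
  have key2 : T * (Y * X) * T = T ^ 2 * Y⁻¹ * X⁻¹ := by
    calc T * (Y * X) * T = T ^ 2 * (T⁻¹ * Y * T⁻¹) * (T * X * T) := by group
      _ = T ^ 2 * Y⁻¹ * X⁻¹ := by rw [h1, h2]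
  have e1 : (q4⁻¹ * X * Y)⁻¹ = Y⁻¹ * (X⁻¹ * q4) := by
    rw [mul_inv_rev, mul_inv_rev, inv_inv]
  have gA : T⁻¹ * (q4⁻¹ * X * Y) * T⁻¹ = (q4⁻¹ * X * Y)⁻¹ := by
    calc T⁻¹ * (q4⁻¹ * X * Y) * T⁻¹
        = (T⁻¹ * q4⁻¹) * ((X * Y) * T⁻¹) := by group
      _ = (q4⁻¹ * T⁻¹) * ((X * Y) * T⁻¹) := by rw [← hcinv T⁻¹]
      _ = q4⁻¹ * (T⁻¹ * (X * Y) * T⁻¹) := by group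
      _ = q4⁻¹ * (Y⁻¹ * X⁻¹ * q4 ^ 2) := by rw [key]
      _ = (q4⁻¹ * X * Y)⁻¹ := by
          rw [e1, hcinv (Y⁻¹ * X⁻¹ * q4 ^ 2)]; group
  have gB : (q4⁻¹ * X * Y)⁻¹ * X⁻¹ * (q4⁻¹ * X * Y) * X * T ^ 2 * q4 ^ 2 = 1 := by
    calc (q4⁻¹ * X * Y)⁻¹ * X⁻¹ * (q4⁻¹ * X * Y) * X * T ^ 2 * q4 ^ 2
        = (Y⁻¹ * (X⁻¹ * q4)) * X⁻¹ * (q4⁻¹ * X * Y) * X * T ^ 2 * q4 ^ 2 := by rw [e1]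
      _ = (Y⁻¹ * X⁻¹) * (q4 * (X⁻¹ * q4⁻¹)) * (X * Y * X * T ^ 2 * q4 ^ 2) := by group
      _ = (Y⁻¹ * X⁻¹) * (q4 * (q4⁻¹ * X⁻¹)) * (X * Y * X * T ^ 2 * q4 ^ 2) := by
          rw [hcinv X⁻¹]
      _ = Y⁻¹ * X⁻¹ * Y * X * T ^ 2 * q4 ^ 2 := by group
      _ = 1 := h3
  have e2 : (q4 * Y * X)⁻¹ = X⁻¹ * (Y⁻¹ * q4⁻¹) := by
    rw [mul_inv_rev, mul_inv_rev]
  have gC : T * (q4 * Y * X) * T = (q4 * Y * X)⁻¹ := by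
    calc T * (q4 * Y * X) * T
        = (T * q4) * ((Y * X) * T) := by group
      _ = (q4 * T) * ((Y * X) * T) := by rw [← hc T]
      _ = q4 * (T * (Y * X) * T) := by group
      _ = q4 * (T ^ 2 * Y⁻¹ * X⁻¹) := by rw [key2]
      _ = q4 * ((X⁻¹ * Y⁻¹ * X * Y * (q4⁻¹ * q4⁻¹)) * Y⁻¹ * X⁻¹) := by rw [hT2]
      _ = (q4 * (X⁻¹ * Y⁻¹ * X * Y)) * ((q4⁻¹ * q4⁻¹) * (Y⁻¹ * X⁻¹)) := by group
      _ = ((X⁻¹ * Y⁻¹ * X * Y) * q4) * ((q4⁻¹ * q4⁻¹) * (Y⁻¹ * X⁻¹)) := by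
          rw [hc (X⁻¹ * Y⁻¹ * X * Y)]
      _ = (X⁻¹ * Y⁻¹ * X * Y) * (q4⁻¹ * (Y⁻¹ * X⁻¹)) := by group
      _ = (X⁻¹ * Y⁻¹ * X * Y) * ((Y⁻¹ * X⁻¹) * q4⁻¹) := by rw [hcinv (Y⁻¹ * X⁻¹)]
      _ = (q4 * Y * X)⁻¹ := by rw [e2]; group
  have gD : Y⁻¹ * (q4 * Y * X)⁻¹ * Y * (q4 * Y * X) * T ^ 2 * q4 ^ 2 = 1 := by
    calc Y⁻¹ * (q4 * Y * X)⁻¹ * Y * (q4 * Y * X) * T ^ 2 * q4 ^ 2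
        = Y⁻¹ * (X⁻¹ * (Y⁻¹ * q4⁻¹)) * Y * (q4 * Y * X) * T ^ 2 * q4 ^ 2 := by rw [e2]
      _ = (Y⁻¹ * X⁻¹ * Y⁻¹) * (q4⁻¹ * Y) * (q4 * (Y * X * T ^ 2 * q4 ^ 2)) := by group
      _ = (Y⁻¹ * X⁻¹ * Y⁻¹) * (Y * q4⁻¹) * (q4 * (Y * X * T ^ 2 * q4 ^ 2)) := by
          rw [hcinv Y]
      _ = Y⁻¹ * X⁻¹ * Y * X * T ^ 2 * q4 ^ 2 := by group
      _ = 1 := h3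
  exact ⟨⟨hquad, h1, gA, gB⟩, ⟨hquad, gC, h2, gD⟩⟩
end

section
/- The Fourier transform σ preserves the DAHA relations: let A be an associative unital algebra with invertible elements X, Y, T and central invertible elements q^{1/2}, t^{1/2} satisfying the type A₁ double affine Hecke algebra relations. Then the triple (X′, Y′, T′) = (Y⁻¹, X·T², T) again satisfies all four type A₁ double affine Hecke algebra relations (with the same q^{1/2} and t^{1/2}). -/
/-- The Fourier transform `σ` preserves the DAHA relations: if invertible
`X, Y, T` and central invertible `q^{1/2}`, `t^{1/2}` satisfy the type `A₁` DAHA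
relations, then so does the triple `(X′, Y′, T′) = (Y⁻¹, X·T², T)`. -/
theorem stmt6 (A : Type*) [Ring A] (X Y T q2 t2 : Aˣ)
    (hq : ∀ a : A, (q2 : A) * a = a * (q2 : A))
    (ht : ∀ a : A, (t2 : A) * a = a * (t2 : A))
    (hquad : ((T : A) - (t2 : A)) * ((T : A) + ((t2⁻¹ : Aˣ) : A)) = 0)
    (h1 : T * X * T = X⁻¹)
    (h2 : T⁻¹ * Y * T⁻¹ = Y⁻¹)
    (h3 : Y⁻¹ * X⁻¹ * Y * X * T ^ 2 * q2 = 1) :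
    ((T : A) - (t2 : A)) * ((T : A) + ((t2⁻¹ : Aˣ) : A)) = 0 ∧
    T * Y⁻¹ * T = (Y⁻¹)⁻¹ ∧
    T⁻¹ * (X * T ^ 2) * T⁻¹ = (X * T ^ 2)⁻¹ ∧
    (X * T ^ 2)⁻¹ * (Y⁻¹)⁻¹ * (X * T ^ 2) * Y⁻¹ * T ^ 2 * q2 = 1 := by
  have hqU : ∀ u : Aˣ, q2 * u = u * q2 := fun u => Units.ext (hq u)
  refine ⟨hquad, ?_, ?_, ?_⟩
  · have h2' : (T⁻¹ * Y * T⁻¹)⁻¹ = (Y⁻¹)⁻¹ := by rw [h2]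
    calc T * Y⁻¹ * T = (T⁻¹ * Y * T⁻¹)⁻¹ := by group
    _ = (Y⁻¹)⁻¹ := h2'
  · calc T⁻¹ * (X * T ^ 2) * T⁻¹ = (T ^ 2)⁻¹ * (T * X * T) := by group
    _ = (T ^ 2)⁻¹ * X⁻¹ := by rw [h1]
    _ = (X * T ^ 2)⁻¹ := by group
  · have hc : Y⁻¹ * T ^ 2 * q2 = q2 * (Y⁻¹ * T ^ 2) := (hqU _).symm
    calc (X * T ^ 2)⁻¹ * (Y⁻¹)⁻¹ * (X * T ^ 2) * Y⁻¹ * T ^ 2 * q2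
        = (T ^ 2)⁻¹ * X⁻¹ * Y * X * T ^ 2 * (Y⁻¹ * T ^ 2 * q2) := by group
    _ = (T ^ 2)⁻¹ * X⁻¹ * Y * X * T ^ 2 * (q2 * (Y⁻¹ * T ^ 2)) := by rw [hc]
    _ = (T ^ 2)⁻¹ * Y * (Y⁻¹ * X⁻¹ * Y * X * T ^ 2 * q2) * Y⁻¹ * T ^ 2 := by group
    _ = (T ^ 2)⁻¹ * Y * 1 * Y⁻¹ * T ^ 2 := by rw [h3]
    _ = 1 := by group
end

section
/- The complex-conjugation automorphism η′ of the elliptic q-braid group: let G be a group with elements X, Y, T and a central element c satisfying the elliptic q-braid relations of type A₁. Then the elements X′ = X·T², Y′ = Y⁻¹, T′ = T⁻¹ together with the central element c⁻¹ again satisfy the elliptic q-braid relations of type A₁, i.e., T′X′T′ = X′⁻¹, T′⁻¹Y′T′⁻¹ = Y′⁻¹, and Y′⁻¹X′⁻¹Y′X′T′²c⁻¹ = 1. -/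
/-- The complex-conjugation automorphism `η′` of the elliptic `q`-braid group:
if `X, Y, T` and a central element `c` of a group `G` satisfy the elliptic
`q`-braid relations of type `A₁`, then `X′ = XT²`, `Y′ = Y⁻¹`, `T′ = T⁻¹`
together with the central element `c⁻¹` satisfy them as well. -/
theorem stmt7 (G : Type*) [Group G] (X Y T c : G)
    (hc : ∀ g : G, c * g = g * c)
    (h1 : T * X * T = X⁻¹)
    (h2 : T⁻¹ * Y * T⁻¹ = Y⁻¹)
    (h3 : Y⁻¹ * X⁻¹ * Y * X * T ^ 2 * c = 1) :
    T⁻¹ * (X * T ^ 2) * T⁻¹ = (X * T ^ 2)⁻¹ ∧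
    (T⁻¹)⁻¹ * Y⁻¹ * (T⁻¹)⁻¹ = (Y⁻¹)⁻¹ ∧
    (Y⁻¹)⁻¹ * (X * T ^ 2)⁻¹ * Y⁻¹ * (X * T ^ 2) * (T⁻¹) ^ 2 * c⁻¹ = 1 := by
  have hc' : ∀ g : G, c⁻¹ * g = g * c⁻¹ := fun g => Commute.inv_left (hc g)
  refine ⟨?_, ?_, ?_⟩
  · rw [mul_inv_rev, ← h1]; group
  · have := congrArg (·⁻¹) h2
    simp only [mul_inv_rev, inv_inv] at this ⊢
    simpa [mul_assoc] using this
  · have h5 : Y * (c⁻¹ * ((T ^ 2)⁻¹ * (X⁻¹ * (Y⁻¹ * X)))) = 1 := by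
      simpa [mul_inv_rev, mul_assoc] using congrArg (fun g => Y * g⁻¹ * Y⁻¹) h3
    rw [hc'] at h5
    rw [← h5]; group
end

section
/- The two-dimensional rigid representation: let R be a commutative ring with an invertible element t^{1/2}, set t = (t^{1/2})² and q^{1/2} = −t⁻¹. Then the 2×2 matrices X = [[0, t⁻¹],[1, 0]], Y = [[t^{1/2}, 0],[0, −t^{1/2}]], T = t^{1/2}·I₂ over R satisfy: (T − t^{1/2}I)(T + t^{−1/2}I) = 0, T X T = X⁻¹, T⁻¹ Y T⁻¹ = Y⁻¹, and q^{1/2}·Y⁻¹X⁻¹YXT² = I₂; moreover Y² = X⁻² = t·I₂ and Y⁻¹X⁻¹YX = −I₂. -/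
/-!
`T` is a scalar, so `T X T = t • X` and `T⁻¹ Y T⁻¹ = t⁻¹ • Y`, and the quadratic relation
for `T` holds because its first factor already vanishes. `X` is antidiagonal and `Y` is
`t^{1/2}` times `diag(1, -1)`, so both square to scalars and `Y` anticommutes with `X`;
this anticommutation gives `Y⁻¹X⁻¹YX = -1`, from which the last DAHA relation follows.
-/

namespace Matrix

variable {R : Type*} [CommRing R]

theorem inv_fin_two_antidiag (a b : Rˣ) :
    (!![0, (a : R); b, 0])⁻¹ = !![0, ((b⁻¹ : Rˣ) : R); ↑a⁻¹, 0] := by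
  refine inv_eq_right_inv ?_
  ext i j
  fin_cases i <;> fin_cases j <;> simp

theorem inv_fin_two_diag (a b : Rˣ) :
    (!![(a : R), 0; 0, b])⁻¹ = !![↑a⁻¹, 0; 0, ((b⁻¹ : Rˣ) : R)] := by
  refine inv_eq_right_inv ?_
  ext i j
  fin_cases i <;> fin_cases j <;> simp

theorem isUnit_det_fin_two_antidiag (a b : Rˣ) : IsUnit (!![0, (a : R); b, 0]).det := by
  rw [det_fin_two_of, zero_mul, zero_sub]
  exact (a * b).isUnit.neg

theorem isUnit_det_fin_two_diag (a b : Rˣ) : IsUnit (!![(a : R), 0; 0, b]).det := by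
  rw [det_fin_two_of, mul_zero, sub_zero]
  exact (a * b).isUnit

theorem fin_two_antidiag_sq (a b : R) : !![0, a; b, 0] ^ 2 = (a * b) • 1 := by
  ext i j
  fin_cases i <;> fin_cases j <;> simp [sq, mul_comm]

theorem fin_two_diag_neg_sq (a : R) : !![a, 0; 0, -a] ^ 2 = (a ^ 2) • 1 := by
  ext i j
  fin_cases i <;> fin_cases j <;> simp [sq]

theorem fin_two_diag_neg_mul_antidiag (u a b : R) :
    !![u, 0; 0, -u] * !![0, a; b, 0] = -(!![0, a; b, 0] * !![u, 0; 0, -u]) := by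
  ext i j
  fin_cases i <;> fin_cases j <;> simp [mul_comm]

theorem inv_mul_inv_mul_mul_eq_neg_one_of_anticomm {n : Type*} [Fintype n] [DecidableEq n]
    {X Y : Matrix n n R} (hX : IsUnit X.det) (hY : IsUnit Y.det) (h : Y * X = -(X * Y)) :
    Y⁻¹ * X⁻¹ * Y * X = -1 := by
  rw [Matrix.mul_assoc _ Y, h, Matrix.mul_neg, Matrix.mul_assoc,
    nonsing_inv_mul_cancel_left X Y hX, nonsing_inv_mul Y hY]

end Matrix

open Matrix

/-- The two-dimensional rigid representation: over a commutative ring `R` with an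
invertible `t^{1/2}`, `t = (t^{1/2})²`, `q^{1/2} = −t⁻¹`, the matrices
`X = [[0, t⁻¹],[1, 0]]`, `Y = diag(t^{1/2}, −t^{1/2})`, `T = t^{1/2}·I₂` satisfy
the type `A₁` DAHA relations, and moreover `Y² = X⁻² = t·I₂`,
`Y⁻¹X⁻¹YX = −I₂`. -/
theorem stmt8 (R : Type*) [CommRing R] (t2 : Rˣ)
    (X Y T : Matrix (Fin 2) (Fin 2) R)
    (hX : X = !![0, ((t2⁻¹ : Rˣ) : R) ^ 2; 1, 0])
    (hY : Y = !![(t2 : R), 0; 0, -(t2 : R)])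
    (hT : T = (t2 : R) • (1 : Matrix (Fin 2) (Fin 2) R)) :
    (T - (t2 : R) • (1 : Matrix (Fin 2) (Fin 2) R)) *
        (T + ((t2⁻¹ : Rˣ) : R) • (1 : Matrix (Fin 2) (Fin 2) R)) = 0 ∧
    T * X * T = X⁻¹ ∧
    T⁻¹ * Y * T⁻¹ = Y⁻¹ ∧
    (-(((t2⁻¹ : Rˣ) : R) ^ 2)) • (Y⁻¹ * X⁻¹ * Y * X * T ^ 2) = 1 ∧
    Y ^ 2 = ((t2 : R) ^ 2) • (1 : Matrix (Fin 2) (Fin 2) R) ∧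
    (X⁻¹) ^ 2 = ((t2 : R) ^ 2) • (1 : Matrix (Fin 2) (Fin 2) R) ∧
    Y⁻¹ * X⁻¹ * Y * X = -1 := by
  have hX' : X = !![0, ((t2⁻¹ ^ 2 : Rˣ) : R); ((1 : Rˣ) : R), 0] := by simp [hX]
  have hY' : Y = !![(t2 : R), 0; 0, ((-t2 : Rˣ) : R)] := by simp [hY]
  have hXinv : X⁻¹ = !![0, 1; (t2 : R) ^ 2, 0] := by
    rw [hX', inv_fin_two_antidiag]
    simp
  have hYinv : Y⁻¹ = !![((t2⁻¹ : Rˣ) : R), 0; 0, -((t2⁻¹ : Rˣ) : R)] := by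
    rw [hY', inv_fin_two_diag]
    simp
  have hTinv : T⁻¹ = ((t2⁻¹ : Rˣ) : R) • 1 := by
    rw [hT, ← Units.smul_def, inv_smul' _ _ (by simp), inv_one, Units.smul_def]
  have hcomm : Y⁻¹ * X⁻¹ * Y * X = -1 := by
    refine inv_mul_inv_mul_mul_eq_neg_one_of_anticomm ?_ ?_ ?_
    · rw [hX']; exact isUnit_det_fin_two_antidiag _ _
    · rw [hY']; exact isUnit_det_fin_two_diag _ _
    · rw [hX, hY]; exact fin_two_diag_neg_mul_antidiag _ _ _
  refine ⟨by rw [hT, sub_self, zero_mul], ?_, ?_, ?_, ?_, ?_, hcomm⟩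
  · rw [hT, hXinv, hX]
    ext i j
    fin_cases i <;> fin_cases j <;> simp [sq]
  · rw [hTinv, hYinv, hY]
    ext i j
    fin_cases i <;> fin_cases j <;> simp
  · rw [hcomm, hT, smul_pow, one_pow, neg_one_mul, smul_neg, neg_smul, neg_neg, smul_smul,
      ← mul_pow, ← Units.val_mul, inv_mul_cancel, Units.val_one, one_pow, one_smul]
  · rw [hY]; exact fin_two_diag_neg_sq _
  · rw [hXinv, fin_two_antidiag_sq, one_mul]
end

section
/- Structure of the two-dimensional braid image: let t^{1/2} ∈ ℂ* be a root of unity, t = (t^{1/2})², and let G ⊆ GL₂(ℂ) be the subgroup generated by the matrices X = [[0, t⁻¹],[1, 0]], Y = [[t^{1/2}, 0],[0, −t^{1/2}]], and T = t^{1/2}·I₂. Then G is finite; the set of scalar matrices contained in G is exactly the subgroup generated by −I₂ and t^{1/2}·I₂; this set of scalar matrices equals the center of G; the quotient of G by its center is isomorphic to (ℤ/2ℤ) × (ℤ/2ℤ); and consequently the order of G equals 4 times the order of the subgroup of ℂ* generated by −1 and t^{1/2}. -/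
/-!
Let `Z = ⟨-1, T⟩`, a group of scalar matrices, hence central. Because `X² = T⁻²`, `Y² = T²`
and `YX = -XY`, the images of `X` and `Y` in `GL₂(ℂ) ⧸ Z` are commuting involutions; as
`T ∈ Z` and `-1 = (XY)⁻¹(YX)`, `G = ⟨X, Y⟩ ⊔ Z` and `G ⧸ Z` consists of the classes of
`1, X, Y, XY`. Since `X` and `Y` do not commute, these four classes are distinct and no element
of `XZ`, `YZ` or `XYZ` commutes with both `X` and `Y`. So `G ⧸ Z` is a Klein four group, and
`Z` is both the center of `G` and the set of scalars in `G`. Finally `Z` is an isomorphic image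
of `⟨-1, t^{1/2}⟩ ≤ ℂˣ`, which is finite since it consists of roots of unity.
-/

open Subgroup

section KleinPair

variable {H : Type*} [Group H]

lemma Subgroup.normal_of_le_center {Z : Subgroup H} (hZ : Z ≤ center H) : Z.Normal :=
  ⟨fun z hz g => by rwa [mem_center_iff.mp (hZ hz) g, mul_inv_cancel_right]⟩

lemma Commute.of_mul_right_mem_center {w z v : H} (hz : z ∈ center H)
    (h : Commute (w * z) v) : Commute w v := by
  simpa using h.mul_left (mem_center_iff.mp (inv_mem hz) v).symm

lemma Subgroup.closure_pair_sup_closure_pair {x y w t : H} (hw : w ∈ closure {x, y}) :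
    closure {x, y} ⊔ closure {w, t} = closure {x, y, t} := by
  have hxy : closure {x, y} ≤ closure {x, y, t} :=
    closure_mono (Set.insert_subset_insert (Set.singleton_subset_iff.mpr (Set.mem_insert _ _)))
  refine le_antisymm (sup_le hxy ((closure_le _).mpr ?_)) ((closure_le _).mpr ?_)
  · rintro g (rfl | rfl)
    exacts [hxy hw, subset_closure (by simp)]
  · rintro g (rfl | rfl | rfl)
    exacts [mem_sup_left (subset_closure (by simp)), mem_sup_left (subset_closure (by simp)),
      mem_sup_right (subset_closure (by simp))]

lemma Subgroup.coe_closure_pair_of_mul_self_eq_one {a b : H} (ha : a * a = 1) (hb : b * b = 1)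
    (hab : Commute a b) : (closure {a, b} : Set H) = {1, a, b, a * b} := by
  have ha' : a⁻¹ = a := inv_eq_of_mul_eq_one_right ha
  have hb' : b⁻¹ = b := inv_eq_of_mul_eq_one_right hb
  have haa (c : H) : a * (a * c) = c := by rw [← mul_assoc, ha, one_mul]
  have hba (c : H) : b * (a * c) = a * (b * c) := by rw [← mul_assoc, ← hab.eq, mul_assoc]
  refine Set.Subset.antisymm (fun g hg => ?_) ?_
  · induction hg using closure_induction with
    | mem g hg => rcases hg with rfl | rfl <;> simp
    | one => simp
    | mul g h _ _ hg hh =>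
      rcases hg with rfl | rfl | rfl | rfl <;> rcases hh with rfl | rfl | rfl | rfl <;>
        simp [mul_assoc, ha, hb, hab.eq.symm, haa, hba]
    | inv g _ hg =>
      rcases hg with rfl | rfl | rfl | rfl <;> simp [ha', hb', hab.eq.symm]
  · rintro g (rfl | rfl | rfl | rfl)
    exacts [one_mem _, subset_closure (by simp), subset_closure (by simp),
      mul_mem (subset_closure (by simp)) (subset_closure (by simp))]

lemma Set.ncard_one_pair_mul {a b : H} (ha : a * a = 1) (ha1 : a ≠ 1) (hb1 : b ≠ 1)
    (hab1 : a * b ≠ 1) : ({1, a, b, a * b} : Set H).ncard = 4 := by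
  have hab : a ≠ b := fun h => hab1 (h ▸ ha)
  rw [Set.ncard_insert_of_notMem, Set.ncard_insert_of_notMem, Set.ncard_pair]
  · simpa [eq_comm] using ha1
  · simp [hab, hb1]
  · simp [ha1.symm, hb1.symm, hab1.symm]

lemma IsKleinFour.of_card_of_mul_self {Q : Type*} [Group Q] (hcard : Nat.card Q = 4)
    (hsq : ∀ g : Q, g * g = 1) : IsKleinFour Q where
  card_four := hcard
  exponent_two := by
    have hdvd : Monoid.exponent Q ∣ 2 :=
      Monoid.exponent_dvd_of_forall_pow_eq_one fun g => (pow_two g).trans (hsq g)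
    refine ((Nat.dvd_prime Nat.prime_two).mp hdvd).resolve_left fun h1 => ?_
    have := Monoid.exp_eq_one_iff.mp h1
    rw [Nat.card_unique] at hcard
    omega

noncomputable def QuotientGroup.subgroupOfEquivMap (G Z : Subgroup H) [Z.Normal] :
    G ⧸ Z.subgroupOf G ≃* G.map (QuotientGroup.mk' Z) :=
  (QuotientGroup.quotientMulEquivOfEq
      (by rw [MonoidHom.ker_domRestrict, QuotientGroup.ker_mk'])).trans
    ((QuotientGroup.quotientKerEquivRange ((QuotientGroup.mk' Z).domRestrict G)).trans
      (MulEquiv.subgroupCongr (MonoidHom.domRestrict_range _ _)))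

variable {Z : Subgroup H} {x y : H}

lemma QuotientGroup.mk_mul_self_eq_one [Z.Normal] (hx : x * x ∈ Z) : (x : H ⧸ Z) * x = 1 := by
  rwa [← QuotientGroup.mk_mul, QuotientGroup.eq_one_iff]

lemma QuotientGroup.commute_mk [Z.Normal] (hxy : (x * y)⁻¹ * (y * x) ∈ Z) :
    Commute (x : H ⧸ Z) y := by
  rwa [Commute, SemiconjBy, ← QuotientGroup.mk_mul, ← QuotientGroup.mk_mul, QuotientGroup.eq]

lemma QuotientGroup.coe_map_mk'_closure_pair_sup [Z.Normal] (hx : x * x ∈ Z) (hy : y * y ∈ Z)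
    (hxy : (x * y)⁻¹ * (y * x) ∈ Z) :
    ((closure {x, y} ⊔ Z).map (QuotientGroup.mk' Z) : Set (H ⧸ Z)) =
      {1, (x : H ⧸ Z), (y : H ⧸ Z), (x : H ⧸ Z) * y} := by
  rw [Subgroup.map_sup, QuotientGroup.map_mk'_self, sup_bot_eq, MonoidHom.map_closure,
    Set.image_pair]
  exact coe_closure_pair_of_mul_self_eq_one (QuotientGroup.mk_mul_self_eq_one hx)
    (QuotientGroup.mk_mul_self_eq_one hy) (QuotientGroup.commute_mk hxy)

/-- The images of `x` and `y` in `H ⧸ Z`, for a central subgroup `Z`, generate a Klein four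
group. -/
structure IsKleinPair (Z : Subgroup H) (x y : H) : Prop where
  le_center : Z ≤ center H
  mul_self_left : x * x ∈ Z
  mul_self_right : y * y ∈ Z
  inv_mul_mem : (x * y)⁻¹ * (y * x) ∈ Z
  not_commute : ¬Commute x y

namespace IsKleinPair

variable (h : IsKleinPair Z x y)
include h

lemma mem_of_commute {g : H} (hg : g ∈ closure {x, y} ⊔ Z) (hgx : Commute g x)
    (hgy : Commute g y) : g ∈ Z := by
  have := normal_of_le_center h.le_center
  have hmem : (g : H ⧸ Z) ∈ ((closure {x, y} ⊔ Z).map (QuotientGroup.mk' Z) : Set (H ⧸ Z)) :=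
    mem_map_of_mem _ hg
  rw [QuotientGroup.coe_map_mk'_closure_pair_sup h.mul_self_left h.mul_self_right
    h.inv_mul_mem] at hmem
  have hcentral (a : H) (ha : (g : H ⧸ Z) = a) : a⁻¹ * g ∈ center H :=
    h.le_center (QuotientGroup.eq.mp ha.symm)
  rcases hmem with hg_one | hg_x | hg_y | hg_xy
  · exact (QuotientGroup.eq_one_iff g).mp hg_one
  · refine absurd (Commute.of_mul_right_mem_center (hcentral x hg_x) ?_) h.not_commute
    rwa [mul_inv_cancel_left]
  · refine absurd (Commute.of_mul_right_mem_center (hcentral y hg_y) ?_).symm h.not_commute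
    rwa [mul_inv_cancel_left]
  · rw [← QuotientGroup.mk_mul] at hg_xy
    have hxyy : Commute (x * y) y :=
      Commute.of_mul_right_mem_center (hcentral (x * y) hg_xy) (by rwa [mul_inv_cancel_left])
    exact absurd ((IsRightRegular.all y).commute_mul_right_iff.mp hxyy).symm h.not_commute

lemma center_eq :
    center (closure {x, y} ⊔ Z : Subgroup H) = Z.subgroupOf (closure {x, y} ⊔ Z) := by
  ext g
  rw [mem_center_iff, mem_subgroupOf]
  refine ⟨fun hg => h.mem_of_commute g.2 ?_ ?_,
    fun hg k => Subtype.ext (mem_center_iff.mp (h.le_center hg) k)⟩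
  · exact congrArg Subtype.val (hg ⟨x, mem_sup_left (subset_closure (by simp))⟩) |>.symm
  · exact congrArg Subtype.val (hg ⟨y, mem_sup_left (subset_closure (by simp))⟩) |>.symm

lemma isKleinFour_map_mk' [Z.Normal] :
    IsKleinFour ((closure {x, y} ⊔ Z).map (QuotientGroup.mk' Z)) := by
  have ha := QuotientGroup.mk_mul_self_eq_one h.mul_self_left
  have hb := QuotientGroup.mk_mul_self_eq_one h.mul_self_right
  have hcoe := QuotientGroup.coe_map_mk'_closure_pair_sup h.mul_self_left h.mul_self_right
    h.inv_mul_mem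
  have hcommute {w v : H} (hw : w ∈ Z) : Commute w v :=
    (mem_center_iff.mp (h.le_center hw) v).symm
  have hne_one {w : H} (hw : w ∈ Z → Commute x y) : (w : H ⧸ Z) ≠ 1 :=
    fun h1 => h.not_commute (hw ((QuotientGroup.eq_one_iff w).mp h1))
  refine .of_card_of_mul_self ?_ ?_
  · rw [← SetLike.coe_sort_coe, Nat.card_coe_set_eq, hcoe]
    refine Set.ncard_one_pair_mul ha (hne_one hcommute) (hne_one fun hy => (hcommute hy).symm) ?_
    rw [← QuotientGroup.mk_mul]
    exact hne_one fun hxy => ((IsRightRegular.all y).commute_mul_right_iff.mp (hcommute hxy)).symm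
  · rintro ⟨g, hg⟩
    rw [← SetLike.mem_coe, hcoe] at hg
    rcases hg with rfl | rfl | rfl | rfl <;> apply Subtype.ext
    · exact mul_one 1
    · exact ha
    · exact hb
    · exact ((QuotientGroup.commute_mk h.inv_mul_mem).symm.mul_mul_mul_comm _ _).trans
        (by rw [ha, hb, one_mul]; rfl)

lemma card_closure_sup : Nat.card (closure {x, y} ⊔ Z : Subgroup H) = 4 * Nat.card Z := by
  have := normal_of_le_center h.le_center
  have := h.isKleinFour_map_mk'
  rw [card_eq_card_quotient_mul_card_subgroup (Z.subgroupOf _),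
    Nat.card_congr (QuotientGroup.subgroupOfEquivMap _ Z).toEquiv, IsKleinFour.card_four,
    Nat.card_congr (subgroupOfEquivOfLe le_sup_right).toEquiv]

lemma nonempty_quotient_center_mulEquiv {Q : Type*} [Group Q] [IsKleinFour Q] :
    Nonempty (↥(closure {x, y} ⊔ Z) ⧸ center ↥(closure {x, y} ⊔ Z) ≃* Q) := by
  have := normal_of_le_center h.le_center
  have := h.isKleinFour_map_mk'
  obtain ⟨e⟩ := IsKleinFour.nonempty_mulEquiv
    (G₁ := (closure {x, y} ⊔ Z).map (QuotientGroup.mk' Z)) (G₂ := Q)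
  exact ⟨(QuotientGroup.quotientMulEquivOfEq h.center_eq).trans
    ((QuotientGroup.subgroupOfEquivMap _ Z).trans e)⟩

end IsKleinPair

end KleinPair

lemma Subgroup.finite_closure_neg_one_pair {R : Type*} [CommRing R] [IsDomain R] {u : Rˣ} {n : ℕ}
    (hn : 0 < n) (hu : u ^ n = 1) : Finite (closure ({-1, u} : Set Rˣ)) := by
  have : NeZero (2 * n) := ⟨by omega⟩
  have hle : closure {-1, u} ≤ rootsOfUnity (2 * n) R := (closure_le _).mpr <| by
    rintro v (rfl | rfl)
    · simp [mem_rootsOfUnity, pow_mul]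
    · simp [mem_rootsOfUnity, pow_mul', hu]
  exact Finite.of_injective _ (Subgroup.inclusion_injective hle)

namespace Matrix

variable {R : Type*} [CommRing R]

lemma scalar_eq_smul_one {n : Type*} [Fintype n] [DecidableEq n] (c : R) :
    scalar n c = c • (1 : Matrix n n R) := by
  rw [scalar_apply, smul_one_eq_diagonal]

lemma antidiag_mul_self (c : R) : !![0, c; 1, 0] * !![0, c; 1, 0] = scalar (Fin 2) c := by
  ext i j; fin_cases i <;> fin_cases j <;> simp

lemma diag_neg_mul_self (s : R) : !![s, 0; 0, -s] * !![s, 0; 0, -s] = scalar (Fin 2) (s ^ 2) := by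
  ext i j; fin_cases i <;> fin_cases j <;> simp [sq]

lemma diag_neg_mul_antidiag (s c : R) :
    !![s, 0; 0, -s] * !![0, c; 1, 0] = -(!![0, c; 1, 0] * !![s, 0; 0, -s]) := by
  ext i j; fin_cases i <;> fin_cases j <;> simp [mul_comm]

lemma antidiag_mul_diag_neg_ne [NoZeroDivisors R] [CharZero R] {s : R} (hs : s ≠ 0) (c : R) :
    !![0, c; 1, 0] * !![s, 0; 0, -s] ≠ !![s, 0; 0, -s] * !![0, c; 1, 0] := by
  intro h
  have := congrFun (congrFun h 1) 0
  simp [CharZero.eq_neg_self_iff, hs] at this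

namespace GeneralLinearGroup

section

variable {n : Type*} [Fintype n] [DecidableEq n]

lemma mem_center_iff_exists_val_eq_smul_one {g : GL n R} :
    g ∈ center (GL n R) ↔ ∃ c : R, (g : Matrix n n R) = c • 1 := by
  simp only [mem_center_iff_val_mem_range_scalar, Set.mem_range, scalar_eq_smul_one, eq_comm]

lemma eq_scalar_of_val_eq_smul_one {g : GL n R} {u : Rˣ}
    (hg : (g : Matrix n n R) = (u : R) • 1) : g = scalar n u :=
  Units.ext (by rw [coe_scalar, hg, scalar_eq_smul_one])

lemma scalar_injective [Nonempty n] : Function.Injective (scalar n : Rˣ →* GL n R) :=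
  fun _ _ h => Units.ext (scalar_inj.mp (congrArg Units.val h))

lemma map_scalar_closure_neg_one_pair (u : Rˣ) :
    (closure {-1, u}).map (scalar n) = closure {-1, scalar n u} := by
  have hneg : scalar n (-1 : Rˣ) = -1 :=
    Units.ext (by simp only [coe_scalar, Units.val_neg, Units.val_one, map_neg, map_one])
  rw [MonoidHom.map_closure, Set.image_pair, hneg]

lemma card_closure_neg_one_scalar [Nonempty n] (u : Rˣ) :
    Nat.card (closure {-1, scalar n u}) = Nat.card (closure ({-1, u} : Set Rˣ)) := by
  rw [← map_scalar_closure_neg_one_pair]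
  exact Nat.card_congr (equivMapOfInjective _ _ scalar_injective).toEquiv.symm

end

variable {X Y : GL (Fin 2) R} {u : Rˣ} {c : R}

lemma mul_self_eq_of_val_eq_diag_neg
    (hY : (Y : Matrix (Fin 2) (Fin 2) R) = !![(u : R), 0; 0, -(u : R)]) :
    Y * Y = scalar (Fin 2) u ^ 2 :=
  Units.ext (by rw [Units.val_mul, hY, diag_neg_mul_self, ← map_pow]; rfl)

lemma inv_mul_mul_eq_neg_one (hX : (X : Matrix (Fin 2) (Fin 2) R) = !![0, c; 1, 0])
    (hY : (Y : Matrix (Fin 2) (Fin 2) R) = !![(u : R), 0; 0, -(u : R)]) :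
    (X * Y)⁻¹ * (Y * X) = -1 := by
  have : Y * X = -(X * Y) := Units.ext (by
    rw [Units.val_neg, Units.val_mul, Units.val_mul, hX, hY, diag_neg_mul_antidiag])
  rw [this, mul_neg, inv_mul_cancel]

lemma not_commute_of_val_eq [NoZeroDivisors R] [CharZero R]
    (hX : (X : Matrix (Fin 2) (Fin 2) R) = !![0, c; 1, 0])
    (hY : (Y : Matrix (Fin 2) (Fin 2) R) = !![(u : R), 0; 0, -(u : R)]) : ¬Commute X Y :=
  fun h => antidiag_mul_diag_neg_ne u.ne_zero c
    (by rw [← hX, ← hY, ← Units.val_mul, ← Units.val_mul, h.eq])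

lemma closure_eq_closure_pair_sup (hX : (X : Matrix (Fin 2) (Fin 2) R) = !![0, c; 1, 0])
    (hY : (Y : Matrix (Fin 2) (Fin 2) R) = !![(u : R), 0; 0, -(u : R)]) :
    closure {X, Y, scalar (Fin 2) u} = closure {X, Y} ⊔ closure {-1, scalar (Fin 2) u} := by
  have hX_mem : X ∈ closure {X, Y} := subset_closure (by simp)
  have hY_mem : Y ∈ closure {X, Y} := subset_closure (by simp)
  refine (closure_pair_sup_closure_pair ?_).symm
  rw [← inv_mul_mul_eq_neg_one hX hY]
  exact mul_mem (inv_mem (mul_mem hX_mem hY_mem)) (mul_mem hY_mem hX_mem)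

section Field

variable {K : Type*} [Field K] {X Y : GL (Fin 2) K} {u : Kˣ}

lemma mul_self_eq_of_val_eq_antidiag
    (hX : (X : Matrix (Fin 2) (Fin 2) K) = !![0, ((u : K) ^ 2)⁻¹; 1, 0]) :
    X * X = (scalar (Fin 2) u ^ 2)⁻¹ := by
  rw [← map_pow, ← map_inv]
  exact Units.ext (by rw [Units.val_mul, hX, antidiag_mul_self, coe_scalar,
    Units.val_inv_eq_inv_val, Units.val_pow_eq_pow_val])

lemma isKleinPair_closure_neg_one_scalar [CharZero K]
    (hX : (X : Matrix (Fin 2) (Fin 2) K) = !![0, ((u : K) ^ 2)⁻¹; 1, 0])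
    (hY : (Y : Matrix (Fin 2) (Fin 2) K) = !![(u : K), 0; 0, -(u : K)]) :
    IsKleinPair (closure {-1, scalar (Fin 2) u}) X Y := by
  have hu_mem : scalar (Fin 2) u ∈ closure {-1, scalar (Fin 2) u} := subset_closure (by simp)
  exact
    { le_center := center_eq_range_scalar (n := Fin 2) (R := K) ▸
        map_scalar_closure_neg_one_pair (n := Fin 2) u ▸ map_le_range _ _
      mul_self_left := mul_self_eq_of_val_eq_antidiag hX ▸ inv_mem (pow_mem hu_mem 2)
      mul_self_right := mul_self_eq_of_val_eq_diag_neg hY ▸ pow_mem hu_mem 2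
      inv_mul_mem := inv_mul_mul_eq_neg_one hX hY ▸ subset_closure (by simp)
      not_commute := not_commute_of_val_eq hX hY }

end Field

end GeneralLinearGroup

end Matrix

open Matrix.GeneralLinearGroup

/-- Structure of the two-dimensional braid image: for a root of unity
`t^{1/2} ∈ ℂ*`, the subgroup `G` of `GL₂(ℂ)` generated by
`X = [[0, t⁻¹],[1, 0]]`, `Y = diag(t^{1/2}, −t^{1/2})`, `T = t^{1/2}·I₂` is
finite; its scalar matrices form exactly the subgroup generated by `−I₂` and
`t^{1/2}·I₂ (= T)`, which is the center of `G`; `G` modulo its center is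
`(ℤ/2) × (ℤ/2)`; and `|G| = 4·|⟨−1, t^{1/2}⟩|`. -/
theorem stmt9 (t2 : ℂˣ) (hroot : ∃ n : ℕ, 0 < n ∧ t2 ^ n = 1)
    (Xu Yu Tu : (Matrix (Fin 2) (Fin 2) ℂ)ˣ)
    (hX : (Xu : Matrix (Fin 2) (Fin 2) ℂ) = !![0, (((t2 : ℂ)) ^ 2)⁻¹; 1, 0])
    (hY : (Yu : Matrix (Fin 2) (Fin 2) ℂ) = !![(t2 : ℂ), 0; 0, -(t2 : ℂ)])
    (hT : (Tu : Matrix (Fin 2) (Fin 2) ℂ) = (t2 : ℂ) • (1 : Matrix (Fin 2) (Fin 2) ℂ))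
    (G : Subgroup (Matrix (Fin 2) (Fin 2) ℂ)ˣ)
    (hG : G = Subgroup.closure {Xu, Yu, Tu}) :
    -- G is finite
    (G : Set (Matrix (Fin 2) (Fin 2) ℂ)ˣ).Finite ∧
    -- the scalar matrices in G form exactly the subgroup generated by −I₂ and t^{1/2}·I₂
    {g : (Matrix (Fin 2) (Fin 2) ℂ)ˣ | g ∈ G ∧
        ∃ c : ℂ, (g : Matrix (Fin 2) (Fin 2) ℂ) = c • (1 : Matrix (Fin 2) (Fin 2) ℂ)} =
      (Subgroup.closure ({-1, Tu} : Set (Matrix (Fin 2) (Fin 2) ℂ)ˣ) :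
        Set (Matrix (Fin 2) (Fin 2) ℂ)ˣ) ∧
    -- the scalar matrices in G are exactly the central elements of G
    (∀ g ∈ G, (∃ c : ℂ, (g : Matrix (Fin 2) (Fin 2) ℂ) = c • (1 : Matrix (Fin 2) (Fin 2) ℂ)) ↔
      ∀ h ∈ G, g * h = h * g) ∧
    -- G modulo its center is (ℤ/2) × (ℤ/2)
    Nonempty ((↥G ⧸ Subgroup.center ↥G) ≃* Multiplicative (ZMod 2 × ZMod 2)) ∧
    -- |G| = 4 · |subgroup of ℂ* generated by −1 and t^{1/2}|
    Nat.card ↥G = 4 * Nat.card ↥(Subgroup.closure ({-1, t2} : Set ℂˣ)) := by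
  obtain ⟨n, hn, htn⟩ := hroot
  obtain rfl := eq_scalar_of_val_eq_smul_one hT
  obtain rfl := hG.trans (closure_eq_closure_pair_sup hX hY)
  set Z := Subgroup.closure {-1, scalar (Fin 2) t2}
  set G := Subgroup.closure {Xu, Yu} ⊔ Z
  have h := isKleinPair_closure_neg_one_scalar hX hY
  have hcard : Nat.card G = 4 * Nat.card (Subgroup.closure ({-1, t2} : Set ℂˣ)) :=
    h.card_closure_sup.trans (congrArg (4 * ·) (card_closure_neg_one_scalar t2))
  have : Finite (Subgroup.closure ({-1, t2} : Set ℂˣ)) := finite_closure_neg_one_pair hn htn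
  have hmem_of_commute {g} (hg : g ∈ G) (hgc : ∀ k ∈ G, g * k = k * g) : g ∈ Z :=
    h.mem_of_commute hg (hgc Xu (mem_sup_left (subset_closure (by simp))))
      (hgc Yu (mem_sup_left (subset_closure (by simp))))
  simp only [← mem_center_iff_exists_val_eq_smul_one]
  refine ⟨?_, ?_, fun g hg => ⟨fun hc k _ => (mem_center_iff.mp hc k).symm,
    fun hgc => h.le_center (hmem_of_commute hg hgc)⟩,
    h.nonempty_quotient_center_mulEquiv, hcard⟩
  · have : Finite G := Nat.finite_of_card_ne_zero (by
      rw [hcard]; exact mul_ne_zero four_ne_zero Nat.card_pos.ne')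
    exact Set.toFinite _
  · ext g
    exact ⟨fun ⟨hg, hc⟩ => hmem_of_commute hg fun k _ => (mem_center_iff.mp hc k).symm,
      fun hg => ⟨mem_sup_right hg, h.le_center hg⟩⟩
end

section
/- The odd-power commutator formula: let G be a group with elements X, Y, T such that T, X², Y² pairwise commute and Y⁻¹XY = XT², XTX⁻¹ = T⁻¹X⁻², YT⁻¹Y⁻¹ = TY⁻², Y⁻¹X²Y = X⁻², X⁻¹Y²X = Y⁻². Set Z = Y²T⁻²X⁻². Then for every odd integer m: (YᵐX⁻ᵐ)² = Z and Y⁻ᵐX⁻ᵐYᵐXᵐ = Z·Y^{−2m}·X^{2m}. -/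
/-- From `u * g * u⁻¹ = g⁻¹`: move `g^j` left past `u`, inverting exponent. -/
lemma swap_inv_conj {G : Type*} [Group G] {u g : G} (h : u * g * u⁻¹ = g⁻¹)
    (j : ℤ) (c : G) : u * (g ^ j * c) = g ^ (-j) * (u * c) := by
  have key : u * g ^ j = g ^ (-j) * u := by
    have h2 : (u * g * u⁻¹) ^ j = u * g ^ j * u⁻¹ := conj_zpow
    rw [h] at h2
    have : g ^ (-j) = u * g ^ j * u⁻¹ := by rw [← h2, inv_zpow, ← zpow_neg]
    rw [this]; group
  rw [← mul_assoc, key, mul_assoc]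

lemma swap_inv_conj' {G : Type*} [Group G] {u g : G} (h : u * g * u⁻¹ = g⁻¹)
    (j : ℤ) : u * g ^ j = g ^ (-j) * u := by
  have := swap_inv_conj h j 1; simpa using this

lemma conj_inv_symm {G : Type*} [Group G] {u g : G} (h : u * g * u⁻¹ = g⁻¹) :
    u⁻¹ * g * u = g⁻¹ := by
  have h2 : u * g⁻¹ * u⁻¹ = g := by
    have := congrArg Inv.inv h
    simpa [mul_inv_rev, mul_assoc] using this
  calc u⁻¹ * g * u = u⁻¹ * (u * g⁻¹ * u⁻¹) * u := by rw [h2]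
    _ = g⁻¹ := by group

lemma swap_comm {G : Type*} [Group G] {u g : G} (h : u * g = g * u)
    (j : ℤ) (c : G) : u * (g ^ j * c) = g ^ j * (u * c) := by
  have key : u * g ^ j = g ^ j * u := ((Commute.zpow_right h j)).eq
  rw [← mul_assoc, key, mul_assoc]

lemma swap_comm' {G : Type*} [Group G] {u g : G} (h : u * g = g * u)
    (j : ℤ) : u * g ^ j = g ^ j * u := ((Commute.zpow_right h j)).eq

lemma swap_comm_zz {G : Type*} [Group G] {u g : G} (h : u * g = g * u)
    (i j : ℤ) (c : G) : u ^ i * (g ^ j * c) = g ^ j * (u ^ i * c) := by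
  have hc : Commute u g := h
  have key := ((hc.zpow_zpow i j)).eq
  rw [← mul_assoc, key, mul_assoc]

lemma swap_comm_zz' {G : Type*} [Group G] {u g : G} (h : u * g = g * u)
    (i j : ℤ) : u ^ i * g ^ j = g ^ j * u ^ i := ((Commute.zpow_zpow h i j)).eq

lemma zpow_merge {G : Type*} [Group G] (g : G) (i j : ℤ) (c : G) :
    g ^ i * (g ^ j * c) = g ^ (i + j) * c := by rw [← mul_assoc, ← zpow_add]

lemma zpow_merge' {G : Type*} [Group G] (g : G) (i j : ℤ) :
    g ^ i * g ^ j = g ^ (i + j) := (zpow_add g i j).symm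

/-- The odd-power commutator formula in the group `𝔅†`: if `T, X², Y²` pairwise
commute and `Y⁻¹XY = XT²`, `XTX⁻¹ = T⁻¹X⁻²`, `YT⁻¹Y⁻¹ = TY⁻²`, `Y⁻¹X²Y = X⁻²`,
`X⁻¹Y²X = Y⁻²`, then with `Z = Y²T⁻²X⁻²`, for every odd integer `m` one has
`(YᵐX⁻ᵐ)² = Z` and `Y⁻ᵐX⁻ᵐYᵐXᵐ = Z·Y^{−2m}·X^{2m}`. -/
theorem stmt11 (G : Type*) [Group G] (X Y T : G)
    (hTX : T * X ^ 2 = X ^ 2 * T)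
    (hTY : T * Y ^ 2 = Y ^ 2 * T)
    (hXY : X ^ 2 * Y ^ 2 = Y ^ 2 * X ^ 2)
    (h1 : Y⁻¹ * X * Y = X * T ^ 2)
    (h2 : X * T * X⁻¹ = T⁻¹ * (X ^ 2)⁻¹)
    (h3 : Y * T⁻¹ * Y⁻¹ = T * (Y ^ 2)⁻¹)
    (h4 : Y⁻¹ * X ^ 2 * Y = (X ^ 2)⁻¹)
    (h5 : X⁻¹ * Y ^ 2 * X = (Y ^ 2)⁻¹) :
    ∀ m : ℤ, Odd m →
      (Y ^ m * X ^ (-m)) ^ 2 = Y ^ 2 * (T ^ 2)⁻¹ * (X ^ 2)⁻¹ ∧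
      Y ^ (-m) * X ^ (-m) * Y ^ m * X ^ m =
        Y ^ 2 * (T ^ 2)⁻¹ * (X ^ 2)⁻¹ * Y ^ (-(2 * m)) * X ^ (2 * m) := by
  intro m hm
  obtain ⟨k, hk⟩ := hm
  subst hk
  -- conjugation facts
  have h4' : Y⁻¹ * X ^ 2 * (Y⁻¹)⁻¹ = (X ^ 2)⁻¹ := by rw [inv_inv]; exact h4
  have h5' : X⁻¹ * Y ^ 2 * (X⁻¹)⁻¹ = (Y ^ 2)⁻¹ := by rw [inv_inv]; exact h5
  have cYa : Y * X ^ 2 * Y⁻¹ = (X ^ 2)⁻¹ := by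
    have := conj_inv_symm h4'; simpa using this
  have cXb : X * Y ^ 2 * X⁻¹ = (Y ^ 2)⁻¹ := by
    have := conj_inv_symm h5'; simpa using this
  -- swap lemmas (move zpowers of X^2 / Y^2 to the left)
  have sYa := swap_inv_conj cYa
  have sYa' := swap_inv_conj' cYa
  have sYia := swap_inv_conj h4'
  have sYia' := swap_inv_conj' h4'
  have sXb := swap_inv_conj cXb
  have sXb' := swap_inv_conj' cXb
  have sXib := swap_inv_conj h5'
  have sXib' := swap_inv_conj' h5'
  have cYY : Y * Y ^ 2 = Y ^ 2 * Y := by group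
  have cYiY : Y⁻¹ * Y ^ 2 = Y ^ 2 * Y⁻¹ := by group
  have cXX : X * X ^ 2 = X ^ 2 * X := by group
  have cXiX : X⁻¹ * X ^ 2 = X ^ 2 * X⁻¹ := by group
  have sYb := swap_comm cYY
  have sYb' := swap_comm' cYY
  have sYib := swap_comm cYiY
  have sYib' := swap_comm' cYiY
  have sXa := swap_comm cXX
  have sXa' := swap_comm' cXX
  have sXia := swap_comm cXiX
  have sXia' := swap_comm' cXiX
  -- a-pows move right past b-pows (b before a)
  have sab := swap_comm_zz hXY
  have sab' := swap_comm_zz' hXY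
  -- (T^2)⁻¹ moves right past a-pows and b-pows
  have cTa : (T ^ 2)⁻¹ * X ^ 2 = X ^ 2 * (T ^ 2)⁻¹ :=
    (((Commute.pow_left (hTX) 2).inv_left)).eq
  have cTb : (T ^ 2)⁻¹ * Y ^ 2 = Y ^ 2 * (T ^ 2)⁻¹ :=
    (((Commute.pow_left (hTY) 2).inv_left)).eq
  have sTa := swap_comm cTa
  have sTa' := swap_comm' cTa
  have sTb := swap_comm cTb
  have sTb' := swap_comm' cTb
  -- consuming standalone Y^2 and (X^2)⁻¹ into the zpow streams
  have eYb : ∀ (j : ℤ) (c : G), Y ^ 2 * ((Y ^ 2 : G) ^ j * c) = (Y ^ 2 : G) ^ (j + 1) * c := by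
    intro j c
    have : (Y : G) ^ 2 * (Y ^ 2 : G) ^ j = (Y ^ 2 : G) ^ (j + 1) := by group
    rw [← mul_assoc, this]
  have eXa : ∀ (j : ℤ) (c : G), (X ^ 2 : G)⁻¹ * ((X ^ 2 : G) ^ j * c) = (X ^ 2 : G) ^ (j - 1) * c := by
    intro j c
    have : (X ^ 2 : G)⁻¹ * (X ^ 2 : G) ^ j = (X ^ 2 : G) ^ (j - 1) := by group
    rw [← mul_assoc, this]
  have eXib : ∀ (j : ℤ) (c : G), (X ^ 2 : G)⁻¹ * ((Y ^ 2 : G) ^ j * c) = (Y ^ 2 : G) ^ j * ((X ^ 2 : G)⁻¹ * c) :=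
    swap_comm ((Commute.inv_left (hXY)).eq)
  have eYb' : ∀ (j : ℤ), Y ^ 2 * (Y ^ 2 : G) ^ j = (Y ^ 2 : G) ^ (j + 1) := by
    intro j; group
  have eXa' : ∀ (j : ℤ), (X ^ 2 : G)⁻¹ * (X ^ 2 : G) ^ j = (X ^ 2 : G) ^ (j - 1) := by
    intro j; group
  have eXib' : ∀ (j : ℤ), (X ^ 2 : G)⁻¹ * (Y ^ 2 : G) ^ j = (Y ^ 2 : G) ^ j * (X ^ 2 : G)⁻¹ :=
    swap_comm' ((Commute.inv_left (hXY)).eq)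
  -- base-case core identities
  have e1 : X * Y = Y * (X * T ^ 2) := by rw [← h1]; group
  have hmv : X⁻¹ * Y = Y * ((T ^ 2)⁻¹ * X⁻¹) := by
    have : Y * ((T ^ 2)⁻¹ * X⁻¹) = X⁻¹ * Y := by
      calc Y * ((T ^ 2)⁻¹ * X⁻¹) = X⁻¹ * ((X * Y) * ((T ^ 2)⁻¹ * X⁻¹)) := by group
        _ = X⁻¹ * ((Y * (X * T ^ 2)) * ((T ^ 2)⁻¹ * X⁻¹)) := by rw [e1]
        _ = X⁻¹ * Y := by group
    exact this.symm
  have hcore1 : Y * (X⁻¹ * (Y * X⁻¹)) = Y ^ 2 * ((T ^ 2)⁻¹ * (X ^ 2)⁻¹) := by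
    calc Y * (X⁻¹ * (Y * X⁻¹)) = Y * ((X⁻¹ * Y) * X⁻¹) := by group
      _ = Y * ((Y * ((T ^ 2)⁻¹ * X⁻¹)) * X⁻¹) := by rw [hmv]
      _ = Y ^ 2 * ((T ^ 2)⁻¹ * (X ^ 2)⁻¹) := by rw [pow_two Y, pow_two X]; group
  have hcore2 : Y⁻¹ * (X⁻¹ * (Y * X)) = (T ^ 2)⁻¹ := by
    calc Y⁻¹ * (X⁻¹ * (Y * X)) = Y⁻¹ * ((X⁻¹ * Y) * X) := by group
      _ = Y⁻¹ * ((Y * ((T ^ 2)⁻¹ * X⁻¹)) * X) := by rw [hmv]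
      _ = (T ^ 2)⁻¹ := by group
  -- power decompositions
  have dY : Y ^ (2 * k + 1) = (Y ^ 2 : G) ^ k * Y := by group
  have dX : X ^ (2 * k + 1) = (X ^ 2 : G) ^ k * X := by group
  have dXi : X ^ (-(2 * k + 1)) = X⁻¹ * (X ^ 2 : G) ^ (-k) := by group
  have dYi : Y ^ (-(2 * k + 1)) = Y⁻¹ * (Y ^ 2 : G) ^ (-k) := by group
  have dY2 : Y ^ (-(2 * (2 * k + 1))) = (Y ^ 2 : G) ^ (-(2 * k + 1)) := by group
  have dX2 : X ^ (2 * (2 * k + 1)) = (X ^ 2 : G) ^ (2 * k + 1) := by group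
  constructor
  · rw [pow_two, dY, dXi]
    simp only [mul_assoc, sYa, sYa', sYia, sYia', sXb, sXb', sXib, sXib',
      sYb, sYb', sYib, sYib', sXa, sXa', sXia, sXia', sab, sab',
      zpow_merge, zpow_merge', neg_add_cancel, add_neg_cancel, zpow_zero, one_mul,
      neg_neg, hcore1]
  · rw [dYi, dXi, dY, dX, dY2, dX2]
    simp only [mul_assoc, sYa, sYa', sYia, sYia', sXb, sXb', sXib, sXib',
      sYb, sYb', sYib, sYib', sXa, sXa', sXia, sXia', sab, sab',
      sTa, sTa', sTb, sTb', eYb, eXa, eXib, eYb', eXa', eXib', add_sub_cancel_left,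
      zpow_merge, zpow_merge', neg_add_cancel, add_neg_cancel, zpow_zero, one_mul,
      neg_neg, hcore2]
    ring_nf
end

section
/- Trace and characteristic polynomial formulas for products of the Livné generators: for all u, v, w ∈ ℂ, the characteristic polynomial of I₁I₂ equals (λ − 1)·(λ² − (|u|² − 2)λ + 1) (so I₁I₂ has eigenvalues {1, e^{iα}, e^{−iα}} exactly when |u|² − 2 = 2cos α); furthermore Tr(I₁I₂I₃) = 3 + uvw − (|u|² + |v|² + |w|²) and det(I₁I₂I₃) = 1. -/
open Matrix Polynomial

/-- The Livné generator `I₁ = [[1, u, v̄],[0, −1, 0],[0, 0, −1]]`. -/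
noncomputable def livneI1 (u v w : ℂ) : Matrix (Fin 3) (Fin 3) ℂ :=
  !![1, u, starRingEnd ℂ v; 0, -1, 0; 0, 0, -1]

/-- The Livné generator `I₂ = [[−1, 0, 0],[ū, 1, w],[0, 0, −1]]`. -/
noncomputable def livneI2 (u v w : ℂ) : Matrix (Fin 3) (Fin 3) ℂ :=
  !![-1, 0, 0; starRingEnd ℂ u, 1, w; 0, 0, -1]

/-- The Livné generator `I₃ = [[−1, 0, 0],[0, −1, 0],[v, w̄, 1]]`. -/
noncomputable def livneI3 (u v w : ℂ) : Matrix (Fin 3) (Fin 3) ℂ :=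
  !![-1, 0, 0; 0, -1, 0; v, starRingEnd ℂ w, 1]

/-- Trace and characteristic polynomial formulas for products of the Livné
generators: `charpoly(I₁I₂) = (λ−1)(λ² − (|u|²−2)λ + 1)` (so `I₁I₂` has
eigenvalues `{1, e^{iα}, e^{−iα}}` exactly when `|u|² − 2 = 2cos α`),
`Tr(I₁I₂I₃) = 3 + uvw − (|u|²+|v|²+|w|²)`, and `det(I₁I₂I₃) = 1`. -/
theorem stmt16 (u v w : ℂ) :
    (livneI1 u v w * livneI2 u v w).charpoly =
      (X - 1) * (X ^ 2 - C ((Complex.normSq u : ℂ) - 2) * X + 1) ∧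
    (∀ α : ℝ, Complex.normSq u - 2 = 2 * Real.cos α →
      (livneI1 u v w * livneI2 u v w).charpoly =
        (X - 1) * (X - C (Complex.exp (α * Complex.I))) *
          (X - C (Complex.exp (-α * Complex.I)))) ∧
    (livneI1 u v w * livneI2 u v w * livneI3 u v w).trace =
      3 + u * v * w - ((Complex.normSq u + Complex.normSq v + Complex.normSq w : ℝ) : ℂ) ∧
    (livneI1 u v w * livneI2 u v w * livneI3 u v w).det = 1 := by
  have h : (Complex.normSq u : ℂ) = u * starRingEnd ℂ u := (Complex.mul_conj u).symm
  have h1 : (livneI1 u v w * livneI2 u v w).charpoly =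
      (X - 1) * (X ^ 2 - C ((Complex.normSq u : ℂ) - 2) * X + 1) := by
    rw [Matrix.charpoly, Matrix.det_fin_three]
    simp [livneI1, livneI2, Matrix.charmatrix_apply, Matrix.mul_fin_three, Matrix.one_apply]
    rw [h]
    simp only [C_mul, map_ofNat]
    ring
  refine ⟨h1, ?_, ?_, ?_⟩
  · intro α hα
    rw [h1]
    have he : Complex.exp (α * Complex.I) + Complex.exp (-α * Complex.I)
        = ((Complex.normSq u : ℂ) - 2) := by
      have := Complex.exp_mul_I (α : ℂ)
      have h2 := Complex.exp_mul_I (-α : ℂ)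
      push_cast
      rw [this, h2, Complex.cos_neg, Complex.sin_neg]
      have : Complex.normSq u - 2 = 2 * Real.cos α := hα
      have h3 : ((Complex.normSq u : ℝ) : ℂ) - 2 = 2 * (Real.cos α : ℂ) := by
        exact_mod_cast congrArg (Complex.ofReal) this
      rw [Complex.ofReal_cos] at h3
      rw [h3]
      ring
    have hm : Complex.exp (α * Complex.I) * Complex.exp (-α * Complex.I) = 1 := by
      rw [← Complex.exp_add]; ring_nf; exact Complex.exp_zero
    have : (X - C (Complex.exp (α * Complex.I))) * (X - C (Complex.exp (-α * Complex.I)))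
        = X ^ 2 - C ((Complex.normSq u : ℂ) - 2) * X + 1 := by
      rw [← he, ← C_1, ← hm]
      simp only [C_add, C_mul]
      ring
    rw [mul_assoc, this]
  · simp [livneI1, livneI2, livneI3, Matrix.mul_fin_three, Matrix.trace_fin_three]
    simp only [← Complex.mul_conj]
    ring
  · rw [Matrix.det_fin_three]
    simp [livneI1, livneI2, livneI3, Matrix.mul_fin_three]
    ring
end

section
/- The trace condition forces the DAHA-type spectrum of I₁I₂I₃: let u, v, w ∈ ℂ and φ ∈ ℝ, assume det H ≠ 0, and suppose 3 + uvw − (|u|² + |v|² + |w|²) = e^{2iφ} − 2e^{−iφ}. Then the characteristic polynomial of I₁I₂I₃ equals (λ + e^{−iφ})²·(λ − e^{2iφ}); in particular I₁I₂I₃ has eigenvalues −e^{−iφ} (with algebraic multiplicity two) and e^{2iφ}, so it satisfies a quadratic relation on its semisimple part of the DAHA form. -/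
open Matrix Polynomial

/-- The Hermitian matrix `H = [[2, u, v̄],[ū, 2, w],[v, w̄, 2]]`. -/
noncomputable def livneH (u v w : ℂ) : Matrix (Fin 3) (Fin 3) ℂ :=
  !![2, u, starRingEnd ℂ v; starRingEnd ℂ u, 2, w; v, starRingEnd ℂ w, 2]

set_option maxHeartbeats 1000000

/-- The trace condition forces the DAHA-type spectrum of `I₁I₂I₃`: if `det H ≠ 0`
and `3 + uvw − (|u|²+|v|²+|w|²) = e^{2iφ} − 2e^{−iφ}` for a real `φ`, then the
characteristic polynomial of `I₁I₂I₃` equals `(λ + e^{−iφ})²(λ − e^{2iφ})`,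
so `I₁I₂I₃` has eigenvalue `−e^{−iφ}` of algebraic multiplicity two and the
simple eigenvalue `e^{2iφ}`. -/
theorem stmt17 (u v w : ℂ) (φ : ℝ) (hdet : (livneH u v w).det ≠ 0)
    (htr : 3 + u * v * w -
        ((Complex.normSq u + Complex.normSq v + Complex.normSq w : ℝ) : ℂ) =
      Complex.exp (2 * φ * Complex.I) - 2 * Complex.exp (-φ * Complex.I)) :
    (livneI1 u v w * livneI2 u v w * livneI3 u v w).charpoly =
      (X + C (Complex.exp (-φ * Complex.I))) ^ 2 *
        (X - C (Complex.exp (2 * φ * Complex.I))) := by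
  unfold livneI1 livneI2 livneI3
  set a := Complex.exp (-φ * Complex.I) with ha
  set b := Complex.exp (2 * φ * Complex.I) with hb
  have h1 : a * a * b = 1 := by
    rw [ha, hb, ← Complex.exp_add, ← Complex.exp_add, ← Complex.exp_zero]
    ring_nf
  have hca : starRingEnd ℂ a = a * b := by
    rw [ha, hb, ← Complex.exp_conj, ← Complex.exp_add]
    congr 1
    simp [Complex.ext_iff]
    ring
  have hcb : starRingEnd ℂ b = a * a := by
    rw [ha, hb, ← Complex.exp_conj, ← Complex.exp_add]
    congr 1
    simp [Complex.ext_iff]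
    ring
  have hs : ((Complex.normSq u + Complex.normSq v + Complex.normSq w : ℝ) : ℂ) =
      u * starRingEnd ℂ u + v * starRingEnd ℂ v + w * starRingEnd ℂ w := by
    rw [Complex.ofReal_add, Complex.ofReal_add, Complex.mul_conj, Complex.mul_conj,
      Complex.mul_conj]
  rw [hs] at htr
  have h2 := congrArg (starRingEnd ℂ) htr
  simp only [map_sub, map_add, _root_.map_mul, map_ofNat, Complex.conj_conj, hca, hcb] at h2
  have Q1 : (3 + C u * C v * C w -
      (C u * C (starRingEnd ℂ u) + C v * C (starRingEnd ℂ v) + C w * C (starRingEnd ℂ w))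
        : Polynomial ℂ) = C b - 2 * C a := by
    have := congrArg C htr
    simpa only [map_sub, map_add, _root_.map_mul, map_ofNat] using this
  have Q2 : (3 + C (starRingEnd ℂ u) * C (starRingEnd ℂ v) * C (starRingEnd ℂ w) -
      (C u * C (starRingEnd ℂ u) + C v * C (starRingEnd ℂ v) + C w * C (starRingEnd ℂ w))
        : Polynomial ℂ) = C a * C a - 2 * (C a * C b) := by
    have h3 := congrArg C h2
    simp only [map_sub, map_add, _root_.map_mul, map_ofNat] at h3
    linear_combination h3
  have Q3 : (C a * C a * C b : Polynomial ℂ) = 1 := by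
    rw [← _root_.map_mul, ← _root_.map_mul, h1, _root_.map_one]
  have hM : (!![1, u, starRingEnd ℂ v; 0, -1, 0; 0, 0, -1] : Matrix (Fin 3) (Fin 3) ℂ) *
      !![-1, 0, 0; starRingEnd ℂ u, 1, w; 0, 0, -1] *
      !![-1, 0, 0; 0, -1, 0; v, starRingEnd ℂ w, 1] =
      !![1 - u * starRingEnd ℂ u + u * v * w - v * starRingEnd ℂ v,
          -u + u * w * starRingEnd ℂ w - starRingEnd ℂ v * starRingEnd ℂ w,
          u * w - starRingEnd ℂ v;
        starRingEnd ℂ u - v * w, 1 - w * starRingEnd ℂ w, -w;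
        v, starRingEnd ℂ w, 1] := by
    ext i j
    fin_cases i <;> fin_cases j <;>
      simp [Matrix.mul_apply, Fin.sum_univ_three] <;> ring
  rw [hM]
  show (Matrix.charmatrix _).det = _
  rw [Matrix.det_fin_three]
  simp only [charmatrix_apply, diagonal_apply]
  simp [Matrix.cons_val_zero, Matrix.cons_val_one, Matrix.head_cons, Matrix.cons_val_two,
    Matrix.tail_cons, map_sub, map_add, _root_.map_mul, _root_.map_one, map_neg]
  linear_combination (-(X ^ 2) : Polynomial ℂ) * Q1 + X * Q2 + Q3
end

section
/- The equilateral Livné parameter satisfies the DAHA trace condition: for every φ ∈ ℝ, the number τ = e^{2iφ/3} + e^{−iφ/3} satisfies |τ|² = 4cos²(φ/2) and 3 + τ³ − 3|τ|² = e^{2iφ} − 2e^{−iφ}. Consequently, taking u = v = w = τ in the Livné matrices, one has Tr(I₁I₂I₃) = e^{2iφ} − 2e^{−iφ} and the characteristic polynomial of I₁I₂ equals (λ − 1)·(λ² − 2cos(φ)·λ + 1), i.e., I₁I₂ has eigenvalues {1, e^{iφ}, e^{−iφ}}. -/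
open Matrix Polynomial

/-!
Put `a = e^{iφ/3}`, a point of the unit circle, so that `τ = a² + a⁻¹` and `τ̄ = a⁻² + a`. Then
`|τ|² = 2 + a³ + a⁻³ = 2 + 2 cos φ` and `3 + τ³ − 3|τ|² = a⁶ − 2a⁻³ = e^{2iφ} − 2e^{−iφ}`.
For arbitrary `u, v, w` one computes `Tr(I₁I₂I₃) = 3 + uvw − |u|² − |v|² − |w|²`, and `I₁I₂` is
block upper triangular with diagonal blocks `[[|u|² − 1, u], [−ū, −1]]` and `1`; the `2×2` block
has trace `|u|² − 2` and determinant `1`.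
-/

open Complex ComplexConjugate

section LivneMatrices

variable (u v w : ℂ)

lemma livneI1_mul_livneI2 : livneI1 u v w * livneI2 u v w =
    !![-1 + u * conj u, u, u * w - conj v; -conj u, -1, -w; 0, 0, 1] := by
  simp only [livneI1, livneI2, mul_fin_three]
  ring_nf

lemma trace_livneI1_mul_livneI2_mul_livneI3 :
    (livneI1 u v w * livneI2 u v w * livneI3 u v w).trace =
      3 + u * v * w - ((normSq u : ℂ) + normSq v + normSq w) := by
  rw [livneI1_mul_livneI2, livneI3, mul_fin_three, trace_fin_three_of, ← mul_conj, ← mul_conj,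
    ← mul_conj]
  ring

lemma charpoly_livneI1_mul_livneI2 :
    (livneI1 u v w * livneI2 u v w).charpoly =
      (X - 1) * (X ^ 2 - C ((normSq u - 2 : ℝ) : ℂ) * X + 1) := by
  rw [livneI1_mul_livneI2, charpoly, det_fin_three]
  simp only [charmatrix_apply_eq, charmatrix_apply_ne, ne_eq, Fin.reduceEq, not_false_eq_true,
    of_apply, cons_val', cons_val_zero, cons_val_one, cons_val, cons_val_fin_one, map_zero, map_one,
    map_neg, map_add, map_sub, map_mul, ofReal_sub, ofReal_ofNat, map_ofNat C, ← mul_conj]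
  ring

end LivneMatrices

section UnitCircle

variable {a : ℂ}

lemma normSq_sq_add_inv (ha : ‖a‖ = 1) : (normSq (a ^ 2 + a⁻¹) : ℂ) = 2 + a ^ 3 + (a ^ 3)⁻¹ := by
  have ha0 : a ≠ 0 := norm_ne_zero_iff.mp (ha ▸ one_ne_zero)
  rw [← mul_conj, map_add, map_pow, ← inv_eq_conj ha, map_inv₀, ← inv_eq_conj ha, inv_inv]
  field_simp
  ring

lemma three_add_pow_three_sub_normSq_sq_add_inv (ha : ‖a‖ = 1) :
    3 + (a ^ 2 + a⁻¹) ^ 3 - 3 * (normSq (a ^ 2 + a⁻¹) : ℂ) = a ^ 6 - 2 * (a ^ 3)⁻¹ := by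
  have ha0 : a ≠ 0 := norm_ne_zero_iff.mp (ha ▸ one_ne_zero)
  rw [normSq_sq_add_inv ha]
  field_simp
  ring

end UnitCircle

/-- The equilateral Livné parameter `τ = e^{2iφ/3} + e^{−iφ/3}` satisfies
`|τ|² = 4cos²(φ/2)` and the DAHA trace condition
`3 + τ³ − 3|τ|² = e^{2iφ} − 2e^{−iφ}`; hence with `u = v = w = τ` one has
`Tr(I₁I₂I₃) = e^{2iφ} − 2e^{−iφ}` and
`charpoly(I₁I₂) = (λ−1)(λ² − 2cos(φ)·λ + 1)`. -/
theorem stmt18 (φ : ℝ) (τ : ℂ)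
    (hτ : τ = Complex.exp (2 * φ * Complex.I / 3) + Complex.exp (-φ * Complex.I / 3)) :
    Complex.normSq τ = 4 * Real.cos (φ / 2) ^ 2 ∧
    3 + τ ^ 3 - 3 * ((Complex.normSq τ : ℝ) : ℂ) =
      Complex.exp (2 * φ * Complex.I) - 2 * Complex.exp (-φ * Complex.I) ∧
    (livneI1 τ τ τ * livneI2 τ τ τ * livneI3 τ τ τ).trace =
      Complex.exp (2 * φ * Complex.I) - 2 * Complex.exp (-φ * Complex.I) ∧
    (livneI1 τ τ τ * livneI2 τ τ τ).charpoly =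
      (X - 1) * (X ^ 2 - C ((2 * Real.cos φ : ℝ) : ℂ) * X + 1) := by
  set a := exp ((φ / 3 : ℝ) * I)
  have ha : ‖a‖ = 1 := norm_exp_ofReal_mul_I _
  have exp_eq_pow (n : ℕ) : exp (n * φ / 3 * I) = a ^ n := by
    rw [← exp_nat_mul]; push_cast; ring_nf
  have hτa : τ = a ^ 2 + a⁻¹ := by
    rw [hτ, ← exp_eq_pow, ← exp_neg]; push_cast; ring_nf
  have h3 : a ^ 3 = exp (φ * I) := by rw [← exp_eq_pow]; push_cast; ring_nf
  have h6 : a ^ 6 = exp (2 * φ * I) := by rw [← exp_eq_pow]; push_cast; ring_nf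
  have h3inv : (a ^ 3)⁻¹ = exp (-φ * I) := by rw [h3, ← exp_neg]; ring_nf
  have hnormSq : normSq τ = 2 + 2 * Real.cos φ := by
    apply ofReal_injective
    rw [hτa, normSq_sq_add_inv ha, h3inv, h3]
    push_cast
    rw [two_cos]
    ring
  have hdaha : 3 + τ ^ 3 - 3 * ((normSq τ : ℝ) : ℂ) = exp (2 * φ * I) - 2 * exp (-φ * I) := by
    rw [hτa, three_add_pow_three_sub_normSq_sq_add_inv ha, h6, h3inv]
  refine ⟨?_, hdaha, ?_, ?_⟩
  · rw [hnormSq, Real.cos_sq, mul_div_cancel₀ _ two_ne_zero]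
    ring
  · rw [trace_livneI1_mul_livneI2_mul_livneI3, ← hdaha]
    ring
  · rw [charpoly_livneI1_mul_livneI2, hnormSq, add_sub_cancel_left]
end
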